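/- arXiv:math/0511419 — 7 statements merged into one kernel-verified Lean document; each statement's English description precedes it below -/
import Mathlib

section
/- For every permutation w of {1,2,...,n}, there exists an alternating subsequence of w of maximum length that contains the value n. -/
/-- The list of values of a permutation of `Fin n` (0-indexed; relative order
is what matters). -/
def permList (n : ℕ) (w : Equiv.Perm (Fin n)) : List ℕ :=
  List.ofFn (fun i => (w i : ℕ))

/-- A list is alternating: `a > b < c > d < ⋯` (descents in even positions). -/
def IsAlt (l : List ℕ) : Prop :=
  ∀ i : ℕ, ∀ hi : i + 1 < l.length,
    if i % 2 = 0 then l.get ⟨i + 1, hi⟩ < l.get ⟨i, Nat.lt_of_succ_lt hi⟩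
    else l.get ⟨i, Nat.lt_of_succ_lt hi⟩ < l.get ⟨i + 1, hi⟩

/-- `asLen n w` : the maximum length of an alternating subsequence of `w`. -/
noncomputable def asLen (n : ℕ) (w : Equiv.Perm (Fin n)) : ℕ :=
  sSup {k | ∃ l : List ℕ, l.Sublist (permList n w) ∧ IsAlt l ∧ l.length = k}

/-- `aCount n k = #{w ∈ S_n : as(w) = k}`. -/
noncomputable def aCount (n k : ℕ) : ℕ :=
  Nat.card {w : Equiv.Perm (Fin n) // asLen n w = k}

/-- `bCount n k = #{w ∈ S_n : as(w) ≤ k}`. -/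
noncomputable def bCount (n k : ℕ) : ℕ :=
  Nat.card {w : Equiv.Perm (Fin n) // asLen n w ≤ k}

lemma getElem_mid (l1 l2 : List ℕ) (b : ℕ) (i : ℕ)
    (hi : i < (l1 ++ b :: l2).length) (h : i = l1.length) :
    (l1 ++ b :: l2)[i] = b := by
  subst h
  rw [List.getElem_append_right (by omega)]; simp

lemma getElem_ne_mid (l1 l2 : List ℕ) (b c : ℕ) (i : ℕ)
    (hi : i < l1.length + 1 + l2.length) (hne : i ≠ l1.length) :
    (l1 ++ b :: l2)[i]'(by simp; omega) = (l1 ++ c :: l2)[i]'(by simp; omega) := by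
  rcases Nat.lt_or_ge i l1.length with h | h
  · rw [List.getElem_append_left h, List.getElem_append_left h]
  · have h' : l1.length < i := lt_of_le_of_ne h (Ne.symm hne)
    rw [List.getElem_append_right (by omega), List.getElem_append_right (by omega)]
    rw [List.getElem_cons, List.getElem_cons]
    simp only [dif_neg (by omega : ¬ i - l1.length = 0)]

lemma alt_replace (l1 l2 : List ℕ) (b m : ℕ) (h : IsAlt (l1 ++ b :: l2))
    (hm : ∀ x ∈ l1 ++ b :: l2, x < m) (he : l1.length % 2 = 0) :
    IsAlt (l1 ++ m :: l2) := by
  intro i hi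
  have hilt : i + 1 < l1.length + 1 + l2.length := by simp at hi; omega
  have hi' : i + 1 < (l1 ++ b :: l2).length := by simp; omega
  simp only [List.get_eq_getElem]
  by_cases h1 : i = l1.length
  · have hieven : i % 2 = 0 := h1 ▸ he
    rw [if_pos hieven]
    have e1 : (l1 ++ m :: l2)[i]'(Nat.lt_of_succ_lt hi) = m :=
      getElem_mid l1 l2 m i (Nat.lt_of_succ_lt hi) h1
    have e2 : (l1 ++ m :: l2)[i+1]'hi = (l1 ++ b :: l2)[i+1]'hi' :=
      getElem_ne_mid l1 l2 m b (i+1) hilt (by omega)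
    rw [e1, e2]
    exact hm _ (List.getElem_mem _)
  · by_cases h2 : i + 1 = l1.length
    · have hiodd : ¬ (i % 2 = 0) := by omega
      rw [if_neg hiodd]
      have e1 : (l1 ++ m :: l2)[i+1]'hi = m := getElem_mid l1 l2 m (i+1) hi h2
      have e2 : (l1 ++ m :: l2)[i]'(Nat.lt_of_succ_lt hi) =
          (l1 ++ b :: l2)[i]'(Nat.lt_of_succ_lt hi') :=
        getElem_ne_mid l1 l2 m b i (by omega) h1
      rw [e1, e2]
      exact hm _ (List.getElem_mem _)
    · have e1 : (l1 ++ m :: l2)[i]'(Nat.lt_of_succ_lt hi) =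
          (l1 ++ b :: l2)[i]'(Nat.lt_of_succ_lt hi') :=
        getElem_ne_mid l1 l2 m b i (by omega) h1
      have e2 : (l1 ++ m :: l2)[i+1]'hi = (l1 ++ b :: l2)[i+1]'hi' :=
        getElem_ne_mid l1 l2 m b (i+1) hilt h2
      have := h i hi'
      simp only [List.get_eq_getElem] at this
      rw [e1, e2]
      exact this

lemma alt_append (l : List ℕ) (m : ℕ) (h : IsAlt l) (hm : ∀ x ∈ l, x < m)
    (he : l.length % 2 = 0) : IsAlt (l ++ [m]) := by
  intro i hi
  have hi2 : i + 1 < l.length + 1 := by simpa using hi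
  simp only [List.get_eq_getElem]
  by_cases h1 : i + 1 = l.length
  · have hiodd : ¬ (i % 2 = 0) := by omega
    rw [if_neg hiodd]
    have e1 : (l ++ [m])[i+1]'hi = m := getElem_mid l [] m (i+1) hi h1
    have e2 : (l ++ [m])[i]'(Nat.lt_of_succ_lt hi) = l[i]'(by omega) :=
      List.getElem_append_left (by omega)
    rw [e1, e2]
    exact hm _ (List.getElem_mem _)
  · have hlt : i + 1 < l.length := by omega
    have e1 : (l ++ [m])[i+1]'hi = l[i+1]'hlt := List.getElem_append_left hlt
    have e2 : (l ++ [m])[i]'(Nat.lt_of_succ_lt hi) = l[i]'(by omega) :=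
      List.getElem_append_left (by omega)
    have := h i hlt
    simp only [List.get_eq_getElem] at this
    rw [e1, e2]
    exact this

lemma alt_nil : IsAlt [] := by intro i hi; simp at hi

lemma alt_singleton (x : ℕ) : IsAlt [x] := by intro i hi; simp at hi

lemma concat_of_ne_nil {l : List ℕ} (h : l ≠ []) : ∃ a c, l = a ++ [c] := by
  rcases List.eq_nil_or_concat l with h' | ⟨a, c, rfl⟩
  · exact absurd h' h
  · exact ⟨a, c, by simp⟩

/-- Every permutation has a maximum-length alternating subsequence containing
the largest value (which is `n - 1` in 0-indexed notation). -/
theorem exists_max_alt_subseq_containing_max (n : ℕ) (hn : 0 < n)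
    (w : Equiv.Perm (Fin n)) :
    ∃ l : List ℕ, l.Sublist (permList n w) ∧ IsAlt l ∧
      l.length = asLen n w ∧ (n - 1) ∈ l := by
  set S := {k | ∃ l : List ℕ, l.Sublist (permList n w) ∧ IsAlt l ∧ l.length = k} with hS
  have hperm_len : (permList n w).length = n := by simp [permList]
  have hbdd : BddAbove S := by
    refine ⟨n, fun k hk => ?_⟩
    obtain ⟨l, hsub, _, rfl⟩ := hk
    calc l.length ≤ (permList n w).length := hsub.length_le
    _ = n := hperm_len
  have hne : S.Nonempty := ⟨0, [], List.nil_sublist _, alt_nil, rfl⟩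
  have hmax : asLen n w ∈ S := Nat.sSup_mem hne hbdd
  have hle : ∀ k ∈ S, k ≤ asLen n w := fun k hk => le_csSup hbdd hk
  -- n-1 is in permList
  have hmem_n1 : (n - 1) ∈ permList n w := by
    simp only [permList, List.mem_ofFn]
    exact ⟨w.symm ⟨n - 1, by omega⟩, by simp⟩
  have hlt_all : ∀ x ∈ permList n w, x < n := by
    intro x hx
    simp only [permList, List.mem_ofFn] at hx
    obtain ⟨i, rfl⟩ := hx
    exact (w i).is_lt
  -- asLen ≥ 1
  have h1S : (1 : ℕ) ∈ S := ⟨[n-1], List.singleton_sublist.mpr hmem_n1, alt_singleton _, rfl⟩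
  have hge1 : 1 ≤ asLen n w := hle 1 h1S
  obtain ⟨l, hsub, halt, hlen⟩ := hmax
  by_cases hin : (n - 1) ∈ l
  · exact ⟨l, hsub, halt, hlen, hin⟩
  -- split permList at n-1
  obtain ⟨u, v, huv⟩ := List.append_of_mem hmem_n1
  have hall : ∀ x ∈ l, x < n - 1 := by
    intro x hx
    have h1 := hlt_all x (hsub.mem hx)
    have h2 : x ≠ n - 1 := fun h => hin (h ▸ hx)
    omega
  rw [huv] at hsub
  rw [List.sublist_append_iff] at hsub
  obtain ⟨l1, l2, rfl, h1, h2⟩ := hsub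
  have h2v : l2.Sublist v := by
    rcases List.sublist_cons_iff.mp h2 with h | ⟨r, hr, hrv⟩
    · exact h
    · exfalso; exact hin (by rw [hr]; simp)
  have hall' : ∀ x ∈ l1 ++ l2, x < n - 1 := hall
  clear h2
  rcases l2 with _ | ⟨c, t⟩
  · -- l = l1
    rcases Nat.mod_two_eq_zero_or_one l1.length with hpar | hpar
    · -- even length: append n-1, contradiction with maximality
      exfalso
      have halt' : IsAlt (l1 ++ [n-1]) := by
        apply alt_append l1 (n-1) (by simpa using halt) (fun x hx => hall x (by simpa using hx)) hpar
      have : l1.length + 1 ∈ S := ⟨l1 ++ [n-1], by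
        rw [huv]
        exact List.Sublist.append h1 (List.singleton_sublist.mpr (by simp)), halt', by simp⟩
      have := hle _ this
      simp at hlen
      omega
    · -- odd length: replace last element
      have hne' : l1 ≠ [] := by
        intro h; rw [h] at hpar; simp at hpar
      obtain ⟨l1', b, rfl⟩ := concat_of_ne_nil hne'
      have hpar' : l1'.length % 2 = 0 := by
        simp [List.length_append] at hpar; omega
      refine ⟨l1' ++ (n-1) :: [], ?_, ?_, ?_, by simp⟩
      · rw [huv]
        refine List.Sublist.append (List.Sublist.trans ?_ h1) ?_
        · exact (List.sublist_append_left l1' [b])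
        · exact List.Sublist.cons₂ _ (List.nil_sublist v)
      · apply alt_replace l1' [] b (n-1)
        · simpa using halt
        · intro x hx; exact hall x (by simpa using hx)
        · exact hpar'
      · simp at hlen ⊢; omega
  · -- l2 = c :: t
    have htv : t.Sublist v := List.sublist_of_cons_sublist h2v
    rcases Nat.mod_two_eq_zero_or_one l1.length with hpar | hpar
    · -- even: replace c with n-1
      refine ⟨l1 ++ (n-1) :: t, ?_, ?_, ?_, by simp⟩
      · rw [huv]
        exact List.Sublist.append h1 (List.Sublist.cons₂ _ htv)
      · exact alt_replace l1 t c (n-1) halt (fun x hx => hall x hx) hpar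
      · simp at hlen ⊢; omega
    · -- odd: replace last of l1
      have hne' : l1 ≠ [] := by
        intro h; rw [h] at hpar; simp at hpar
      obtain ⟨l1', b, rfl⟩ := concat_of_ne_nil hne'
      have hpar' : l1'.length % 2 = 0 := by
        simp [List.length_append] at hpar; omega
      refine ⟨l1' ++ (n-1) :: (c :: t), ?_, ?_, ?_, by simp⟩
      · rw [huv]
        refine List.Sublist.append (List.Sublist.trans ?_ h1) (List.Sublist.cons₂ _ h2v)
        exact List.sublist_append_left l1' [b]
      · apply alt_replace l1' (c :: t) b (n-1)
        · simpa [List.append_assoc] using halt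
        · intro x hx
          exact hall x (by simpa [List.append_assoc] using hx)
        · exact hpar'
      · simp at hlen ⊢; omega
end

section
/- Let a_k(n+1) denote the number of permutations w of {1,...,n+1} with as(w) = k. Then for 1 ≤ k ≤ n+1, a_k(n+1) = Σ_{j=0}^{n} C(n,j) Σ_{2r+s=k-1, r,s≥0} (a_{2r}(j) + a_{2r+1}(j)) a_s(n-j), with initial condition a_0(0) = 1. -/
section AltList

variable {α β : Type*} [LinearOrder α] [LinearOrder β]

/-- `l` alternates with a descent at position `i` exactly when `i + e` is even: `IsAltFrom 0` is
`IsAlt`, and `IsAltFrom 1` asks for `a < b > c < ⋯`. -/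
def IsAltFrom (e : ℕ) (l : List α) : Prop :=
  ∀ i (hi : i + 1 < l.length), if (i + e) % 2 = 0 then l[i + 1] < l[i] else l[i] < l[i + 1]

noncomputable def altLen (e : ℕ) (l : List α) : ℕ :=
  sSup {k | ∃ m : List α, m.Sublist l ∧ IsAltFrom e m ∧ m.length = k}

theorem isAltFrom_nil (e : ℕ) : IsAltFrom e ([] : List α) := fun _ hi => by simp at hi

theorem isAltFrom_congr {e e' : ℕ} (h : e % 2 = e' % 2) {l : List α} :
    IsAltFrom e l ↔ IsAltFrom e' l := by
  simp only [IsAltFrom, show ∀ i, (i + e) % 2 = (i + e') % 2 by omega]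

theorem IsAltFrom.take {e : ℕ} {l : List α} (h : IsAltFrom e l) (t : ℕ) :
    IsAltFrom e (l.take t) := fun i hi => by
  simp only [List.length_take, List.getElem_take] at hi ⊢
  exact h i (by omega)

theorem IsAltFrom.drop {e : ℕ} {l : List α} (h : IsAltFrom e l) (t : ℕ) :
    IsAltFrom (e + t) (l.drop t) := fun i hi => by
  simp only [List.length_drop, List.getElem_drop] at hi ⊢
  have := h (t + i) (by omega)
  rw [show (t + i + e) % 2 = (i + (e + t)) % 2 by omega] at this
  simpa only [Nat.add_assoc] using this

theorem IsAltFrom.of_append_left {e : ℕ} {l₁ l₂ : List α} (h : IsAltFrom e (l₁ ++ l₂)) :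
    IsAltFrom e l₁ := by
  simpa using h.take l₁.length

theorem IsAltFrom.of_append_right {e : ℕ} {l₁ l₂ : List α} (h : IsAltFrom e (l₁ ++ l₂)) :
    IsAltFrom (e + l₁.length) l₂ := by
  simpa using h.drop l₁.length

theorem isAltFrom_map_iff_of_strictMono {f : α → β} (hf : StrictMono f) {e : ℕ} {l : List α} :
    IsAltFrom e (l.map f) ↔ IsAltFrom e l := by
  simp only [IsAltFrom, List.length_map, List.getElem_map, hf.lt_iff_lt]

theorem isAltFrom_map_iff_of_strictAnti {f : α → β} (hf : StrictAnti f) {e : ℕ} {l : List α} :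
    IsAltFrom e (l.map f) ↔ IsAltFrom (e + 1) l := by
  refine forall_congr' fun i => ?_
  simp only [List.length_map, List.getElem_map, hf.lt_iff_gt]
  by_cases h : (i + e) % 2 = 0
  · simp [h, show (i + (e + 1)) % 2 ≠ 0 by omega]
  · simp [h, show (i + (e + 1)) % 2 = 0 by omega]

section altLen

variable (e : ℕ) (l : List α)

theorem altLen_bddAbove :
    BddAbove {k | ∃ m : List α, m.Sublist l ∧ IsAltFrom e m ∧ m.length = k} :=
  ⟨l.length, fun _ ⟨_, hm, _, hlen⟩ => hlen ▸ hm.length_le⟩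

theorem exists_sublist_isAltFrom_length_eq_altLen :
    ∃ m : List α, m.Sublist l ∧ IsAltFrom e m ∧ m.length = altLen e l :=
  Nat.sSup_mem ⟨0, by exact ⟨[], List.nil_sublist l, isAltFrom_nil e, rfl⟩⟩ (altLen_bddAbove e l)

variable {e l}

theorem length_le_altLen {m : List α} (hm : m.Sublist l) (ha : IsAltFrom e m) :
    m.length ≤ altLen e l :=
  le_csSup (altLen_bddAbove e l) ⟨m, hm, ha, rfl⟩

theorem altLen_le {c : ℕ} (h : ∀ m : List α, m.Sublist l → IsAltFrom e m → m.length ≤ c) :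
    altLen e l ≤ c := by
  obtain ⟨m, hm, ha, hlen⟩ := exists_sublist_isAltFrom_length_eq_altLen e l
  exact hlen ▸ h m hm ha

end altLen

theorem altLen_map_of_strictMono {f : α → β} (hf : StrictMono f) (e : ℕ) (l : List α) :
    altLen e (l.map f) = altLen e l := by
  simp only [altLen, List.sublist_map_iff]
  congr 1
  ext k
  constructor
  · rintro ⟨_, ⟨m, hm, rfl⟩, ha, rfl⟩
    exact ⟨m, hm, (isAltFrom_map_iff_of_strictMono hf).1 ha, by simp⟩
  · rintro ⟨m, hm, ha, rfl⟩
    exact ⟨_, ⟨m, hm, rfl⟩, (isAltFrom_map_iff_of_strictMono hf).2 ha, by simp⟩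

theorem altLen_map_of_strictAnti {f : α → β} (hf : StrictAnti f) (e : ℕ) (l : List α) :
    altLen e (l.map f) = altLen (e + 1) l := by
  simp only [altLen, List.sublist_map_iff]
  congr 1
  ext k
  constructor
  · rintro ⟨_, ⟨m, hm, rfl⟩, ha, rfl⟩
    exact ⟨m, hm, (isAltFrom_map_iff_of_strictAnti hf).1 ha, by simp⟩
  · rintro ⟨m, hm, ha, rfl⟩
    exact ⟨_, ⟨m, hm, rfl⟩, (isAltFrom_map_iff_of_strictAnti hf).2 ha, by simp⟩

theorem altLen_zero_le_altLen_one_add_one (l : List α) : altLen 0 l ≤ altLen 1 l + 1 := by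
  obtain ⟨m, hm, ha, hlen⟩ := exists_sublist_isAltFrom_length_eq_altLen 0 l
  have := length_le_altLen ((List.drop_sublist 1 m).trans hm) (ha.drop 1)
  simp only [List.length_drop, zero_add] at this
  omega

theorem isAltFrom_cons_iff {e : ℕ} {a : α} {l : List α} :
    IsAltFrom e (a :: l) ↔
      (∀ h : 0 < l.length, if e % 2 = 0 then l[0] < a else a < l[0]) ∧ IsAltFrom (e + 1) l := by
  constructor
  · intro h
    refine ⟨fun hl => by simpa using h 0 (by simpa using hl), fun i hi => ?_⟩
    have := h (i + 1) (by simpa using hi)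
    rwa [show (i + 1 + e) % 2 = (i + (e + 1)) % 2 by omega] at this
  · rintro ⟨h₀, h⟩ (_ | i) hi
    · simpa using h₀ (by simpa using hi)
    · have := h i (by simpa using hi)
      rwa [show (i + (e + 1)) % 2 = (i + 1 + e) % 2 by omega] at this

theorem isAltFrom_append_cons_iff {e : ℕ} {l₁ l₂ : List α} {a : α} :
    IsAltFrom e (l₁ ++ a :: l₂) ↔
      IsAltFrom e (l₁ ++ [a]) ∧ IsAltFrom (e + l₁.length) (a :: l₂) := by
  refine ⟨fun h => ⟨?_, by simpa using h.drop l₁.length⟩, fun ⟨h₁, h₂⟩ i hi => ?_⟩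
  · simpa [List.take_append, List.take_of_length_le] using h.take (l₁.length + 1)
  · simp only [List.length_append, List.length_cons] at hi
    rcases Nat.lt_or_ge i l₁.length with hil | hil
    · have := h₁ i (by simpa using hil)
      simpa [List.getElem_append, hil, show i + 1 ≤ l₁.length from hil] using this
    · have := h₂ (i - l₁.length) (by simp only [List.length_cons]; omega)
      rw [show (i - l₁.length + (e + l₁.length)) % 2 = (i + e) % 2 by omega] at this
      simpa [List.getElem_append_right, hil, show l₁.length ≤ i + 1 by omega,
        show i + 1 - l₁.length = i - l₁.length + 1 by omega] using this

theorem isAltFrom_zero_append_singleton_iff {l : List α} {M : α} (hl : ∀ x ∈ l, x < M) :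
    IsAltFrom 0 (l ++ [M]) ↔ IsAltFrom 0 l ∧ l.length % 2 = 0 := by
  refine ⟨fun h => ⟨h.of_append_left, ?_⟩, fun ⟨h, heven⟩ i hi => ?_⟩
  · by_contra hodd
    have := h (l.length - 1) (by simp only [List.length_append, List.length_singleton]; omega)
    rw [if_pos (by omega), List.getElem_concat_length (i := l.length - 1 + 1) (by omega),
      List.getElem_append_left (by omega)] at this
    exact (hl _ (List.getElem_mem _)).not_gt this
  · simp only [List.length_append, List.length_singleton] at hi
    rcases Nat.lt_or_ge (i + 1) l.length with hil | hil
    · simpa [List.getElem_append, hil, show i < l.length by omega] using h i hil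
    · rw [if_neg (by omega), List.getElem_concat_length (i := i + 1) (by omega),
        List.getElem_append_left (by omega)]
      exact hl _ (List.getElem_mem _)

theorem isAltFrom_zero_append_cons_iff_of_forall_lt {l₁ l₂ : List α} {M : α}
    (h₁ : ∀ x ∈ l₁, x < M) (h₂ : ∀ x ∈ l₂, x < M) :
    IsAltFrom 0 (l₁ ++ M :: l₂) ↔ (IsAltFrom 0 l₁ ∧ l₁.length % 2 = 0) ∧ IsAltFrom 1 l₂ := by
  rw [isAltFrom_append_cons_iff, isAltFrom_zero_append_singleton_iff h₁, isAltFrom_cons_iff,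
    zero_add]
  refine ⟨fun ⟨h, _, hl₂⟩ => ⟨h, (isAltFrom_congr (by omega)).1 hl₂⟩,
    fun ⟨⟨hl₁, heven⟩, hl₂⟩ => ⟨⟨hl₁, heven⟩, fun _ => ?_, (isAltFrom_congr (by omega)).1 hl₂⟩⟩
  rw [if_pos heven]
  exact h₂ _ (List.getElem_mem _)

theorem altLen_congr {e e' : ℕ} (h : e % 2 = e' % 2) (l : List α) : altLen e l = altLen e' l := by
  simp only [altLen, isAltFrom_congr h]

/-- The maximum `M` splits an alternating subsequence into an even-length alternating prefix
(which must end with an ascent into `M`) and a suffix starting with an ascent. -/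
theorem altLen_append_cons_of_forall_lt {u v : List α} {M : α} (hu : ∀ x ∈ u, x < M)
    (hv : ∀ x ∈ v, x < M) :
    altLen 0 (u ++ M :: v) = 2 * (altLen 0 u / 2) + 1 + altLen 1 v := by
  apply le_antisymm
  · refine altLen_le fun m hm ha => ?_
    obtain ⟨γ, δ, rfl, hγ, hδ⟩ := List.sublist_append_iff.1 hm
    have hγlen := length_le_altLen hγ ha.of_append_left
    rw [List.length_append]
    rcases List.sublist_cons_iff.1 hδ with hδ | ⟨β, rfl, hβ⟩
    · have hδlen := length_le_altLen hδ ha.of_append_right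
      rcases Nat.mod_two_eq_zero_or_one γ.length with hγ2 | hγ2
      · rw [altLen_congr (e' := 0) (by omega)] at hδlen
        have := altLen_zero_le_altLen_one_add_one v
        omega
      · rw [altLen_congr (e' := 1) (by omega)] at hδlen
        omega
    · obtain ⟨⟨-, heven⟩, hβa⟩ := (isAltFrom_zero_append_cons_iff_of_forall_lt
        (fun x hx => hu x (hγ.subset hx)) (fun x hx => hv x (hβ.subset hx))).1 ha
      have := length_le_altLen hβ hβa
      rw [List.length_cons]
      omega
  · obtain ⟨m, hmu, hma, hmlen⟩ := exists_sublist_isAltFrom_length_eq_altLen 0 u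
    obtain ⟨β, hβv, hβa, hβlen⟩ := exists_sublist_isAltFrom_length_eq_altLen 1 v
    set γ := m.take (2 * (altLen 0 u / 2))
    have hγlen : γ.length = 2 * (altLen 0 u / 2) := by simp only [γ, List.length_take]; omega
    have hγu : γ.Sublist u := (List.take_sublist _ _).trans hmu
    have hglue : IsAltFrom 0 (γ ++ M :: β) :=
      (isAltFrom_zero_append_cons_iff_of_forall_lt (fun x hx => hu x (hγu.subset hx))
        (fun x hx => hv x (hβv.subset hx))).2 ⟨⟨hma.take _, by omega⟩, hβa⟩
    have := length_le_altLen (hγu.append (hβv.cons_cons M)) hglue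
    simp only [List.length_append, List.length_cons] at this
    omega

end AltList

open Equiv Finset
open scoped Nat

theorem isAlt_iff_isAltFrom_zero (l : List ℕ) : IsAlt l ↔ IsAltFrom 0 l := by
  simp [IsAlt, IsAltFrom]

theorem asLen_eq_altLen_ofFn {n : ℕ} (w : Perm (Fin n)) : asLen n w = altLen 0 (List.ofFn w) := by
  rw [← altLen_map_of_strictMono Fin.val_strictMono, List.map_ofFn]
  simp only [asLen, altLen, permList, isAlt_iff_isAltFrom_zero]
  rfl

theorem asLen_revPerm_mul {n : ℕ} (v : Perm (Fin n)) :
    asLen n (Fin.revPerm * v) = altLen 1 (List.ofFn v) := by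
  rw [asLen_eq_altLen_ofFn, ← altLen_map_of_strictAnti Fin.rev_strictAnti, List.map_ofFn]
  rfl

theorem aCount_zero_zero : aCount 0 0 = 1 := by
  have h (w : Perm (Fin 0)) : asLen 0 w = 0 := by
    rw [asLen_eq_altLen_ofFn, List.ofFn_zero, ← Nat.le_zero]
    exact altLen_le fun m hm _ => by simp [List.sublist_nil.1 hm]
  rw [aCount, Nat.card_congr (subtypeUnivEquiv h), Nat.card_eq_fintype_card, Fintype.card_perm,
    Fintype.card_fin, Nat.factorial_zero]

section Relabel

variable {n k : ℕ} (T : Finset (Fin n)) (hT : T.card = k)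

def relabel (w : Perm (Fin k)) : List (Fin (n + 1)) :=
  (List.ofFn w).map (Fin.castSucc ∘ T.orderEmbOfFin hT)

theorem strictMono_castSucc_comp_orderEmbOfFin :
    StrictMono (Fin.castSucc ∘ T.orderEmbOfFin hT) :=
  Fin.strictMono_castSucc.comp (OrderEmbedding.strictMono _)

variable {T hT}

theorem relabel_injective : Function.Injective (relabel T hT) := fun _ _ h =>
  DFunLike.coe_injective <| List.ofFn_injective <|
    List.map_injective_iff.2 (strictMono_castSucc_comp_orderEmbOfFin T hT).injective h

theorem altLen_relabel (e : ℕ) (w : Perm (Fin k)) :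
    altLen e (relabel T hT w) = altLen e (List.ofFn w) :=
  altLen_map_of_strictMono (strictMono_castSucc_comp_orderEmbOfFin T hT) e _

theorem nodup_relabel (w : Perm (Fin k)) : (relabel T hT w).Nodup :=
  (List.nodup_ofFn.2 w.injective).map (strictMono_castSucc_comp_orderEmbOfFin T hT).injective

theorem castSucc_mem_relabel_iff (w : Perm (Fin k)) (x : Fin n) :
    x.castSucc ∈ relabel T hT w ↔ x ∈ T := by
  simp only [relabel, List.mem_map, List.mem_ofFn, Function.comp_apply, Fin.castSucc_inj]
  rw [← mem_coe, ← T.range_orderEmbOfFin hT]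
  exact ⟨fun ⟨_, _, h⟩ => ⟨_, h⟩, fun ⟨a, h⟩ => ⟨a, w.surjective a, h⟩⟩

theorem exists_castSucc_of_mem_relabel {w : Perm (Fin k)} {x : Fin (n + 1)}
    (hx : x ∈ relabel T hT w) : ∃ y ∈ T, y.castSucc = x := by
  obtain ⟨_, -, rfl⟩ := List.mem_map.1 hx
  exact ⟨_, T.orderEmbOfFin_mem hT _, rfl⟩

theorem last_notMem_relabel (w : Perm (Fin k)) : Fin.last n ∉ relabel T hT w := fun h => by
  obtain ⟨y, -, hy⟩ := exists_castSucc_of_mem_relabel h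
  exact Fin.castSucc_ne_last y hy

end Relabel

section InsertMax

variable {n : ℕ} (S : Finset (Fin n))

theorem card_compl_eq_sub_card : Sᶜ.card = n - S.card := by
  rw [card_compl, Fintype.card_fin]

def insertMaxList (u : Perm (Fin S.card)) (v : Perm (Fin (n - S.card))) : List (Fin (n + 1)) :=
  relabel S rfl u ++ Fin.last n :: relabel Sᶜ (card_compl_eq_sub_card S) v

variable {S} (u : Perm (Fin S.card)) (v : Perm (Fin (n - S.card)))

theorem length_insertMaxList : (insertMaxList S u v).length = n + 1 := by
  have := S.card_le_univ
  simp only [insertMaxList, relabel, List.length_append, List.length_map, List.length_ofFn,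
    List.length_cons, Fintype.card_fin] at this ⊢
  omega

theorem nodup_insertMaxList : (insertMaxList S u v).Nodup := by
  refine List.nodup_append.2 ⟨nodup_relabel u,
    List.nodup_cons.2 ⟨last_notMem_relabel v, nodup_relabel v⟩, fun x hx y hy hxy => ?_⟩
  obtain ⟨x, hxS, rfl⟩ := exists_castSucc_of_mem_relabel hx
  rcases List.mem_cons.1 hy with rfl | hy
  · exact Fin.castSucc_ne_last x hxy
  · exact mem_compl.1 ((castSucc_mem_relabel_iff v x).1 (hxy ▸ hy)) hxS

noncomputable def insertMax : Perm (Fin (n + 1)) :=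
  Equiv.ofBijective ((insertMaxList S u v).get ∘ Fin.cast (length_insertMaxList u v).symm)
    (Finite.injective_iff_bijective.1 <|
      (List.nodup_iff_injective_get.1 (nodup_insertMaxList u v)).comp (Fin.cast_injective _))

theorem ofFn_insertMax : List.ofFn (insertMax u v) = insertMaxList S u v := by
  refine List.ext_getElem (by simp [length_insertMaxList]) fun i _ _ => ?_
  rw [List.getElem_ofFn]
  rfl

theorem asLen_insertMax :
    asLen (n + 1) (insertMax u v) = 2 * (asLen S.card u / 2) + 1 + altLen 1 (List.ofFn v) := by
  have hlt {k : ℕ} (T : Finset (Fin n)) (hT : T.card = k) (w : Perm (Fin k)) :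
      ∀ x ∈ relabel T hT w, x < Fin.last n := fun x hx => by
    obtain ⟨y, -, rfl⟩ := exists_castSucc_of_mem_relabel hx
    exact Fin.castSucc_lt_last y
  rw [asLen_eq_altLen_ofFn, ofFn_insertMax, insertMaxList,
    altLen_append_cons_of_forall_lt (hlt _ _ u) (hlt _ _ v), altLen_relabel, altLen_relabel,
    asLen_eq_altLen_ofFn]

end InsertMax

theorem insertMax_injective {n : ℕ} :
    Function.Injective fun x : Σ S : Finset (Fin n), Perm (Fin S.card) × Perm (Fin (n - S.card)) =>
      insertMax x.2.1 x.2.2 := by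
  rintro ⟨S, u, v⟩ ⟨S', u', v'⟩ h
  have hL := congrArg (fun w : Perm (Fin (n + 1)) => List.ofFn w) h
  simp only [ofFn_insertMax, insertMaxList] at hL
  obtain ⟨hu, -, hv⟩ :=
    (List.append_cons_inj_of_notMem (last_notMem_relabel u) (last_notMem_relabel v)).1 hL
  obtain rfl : S = S' := Finset.ext fun x => by
    rw [← castSucc_mem_relabel_iff (hT := rfl) u, hu, castSucc_mem_relabel_iff]
  obtain rfl := relabel_injective hu
  obtain rfl := relabel_injective hv
  rfl

theorem card_sigma_perm_prod_perm (n : ℕ) :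
    Fintype.card (Σ S : Finset (Fin n), Perm (Fin S.card) × Perm (Fin (n - S.card))) =
      (n + 1)! := by
  simp only [Fintype.card_sigma, Fintype.card_prod, Fintype.card_perm, Fintype.card_fin]
  rw [← powerset_univ, sum_powerset_apply_card (fun j => j ! * (n - j)!), card_univ,
    Fintype.card_fin, sum_congr rfl fun j hj => by
      rw [smul_eq_mul, ← mul_assoc, Nat.choose_mul_factorial_mul_factorial
        (Nat.lt_succ_iff.1 (mem_range.1 hj))],
    sum_const, card_range, smul_eq_mul, Nat.factorial_succ]

/-- Every permutation of `Fin (n + 1)` arises exactly once from `insertMax`. -/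
noncomputable def insertMaxEquiv (n : ℕ) :
    (Σ S : Finset (Fin n), Perm (Fin S.card) × Perm (Fin (n - S.card))) ≃ Perm (Fin (n + 1)) :=
  Equiv.ofBijective _ <| (Fintype.bijective_iff_injective_and_card _).2
    ⟨insertMax_injective, by rw [card_sigma_perm_prod_perm, Fintype.card_perm, Fintype.card_fin]⟩

theorem card_filter_two_mul_div_two_add_one_add_eq {X Y : Type*} [Fintype X] [Fintype Y]
    (f : X → ℕ) (g : Y → ℕ) {k : ℕ} (hk : 1 ≤ k) :
    #{p : X × Y | 2 * (f p.1 / 2) + 1 + g p.2 = k} =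
      ∑ r ∈ range ((k - 1) / 2 + 1),
        (#{x | f x = 2 * r} + #{x | f x = 2 * r + 1}) * #{y | g y = k - 1 - 2 * r} := by
  rw [card_eq_sum_card_fiberwise (f := fun p => f p.1 / 2) (t := range ((k - 1) / 2 + 1))
    fun p hp => by
    simp only [mem_coe, mem_filter, mem_univ, true_and, mem_range] at hp ⊢
    omega]
  classical
  refine sum_congr rfl fun r hr => ?_
  have hr : r ≤ (k - 1) / 2 := Nat.lt_succ_iff.1 (mem_range.1 hr)
  have hfiber : ({p ∈ {p : X × Y | 2 * (f p.1 / 2) + 1 + g p.2 = k} | f p.1 / 2 = r} : Finset _) =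
      ({x | f x / 2 = r} : Finset X) ×ˢ ({y | g y = k - 1 - 2 * r} : Finset Y) := by
    ext p
    simp only [mem_filter, mem_univ, true_and, mem_product]
    omega
  have hhalf : ({x | f x / 2 = r} : Finset X) =
      ({x | f x = 2 * r} : Finset X) ∪ ({x | f x = 2 * r + 1} : Finset X) := by
    rw [← filter_or]
    exact filter_congr fun x _ => by omega
  rw [hfiber, card_product, hhalf, card_union_of_disjoint (disjoint_filter.2 fun _ _ _ => by omega)]

theorem card_filter_asLen_eq (n s : ℕ) : #{w : Perm (Fin n) | asLen n w = s} = aCount n s := by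
  rw [aCount, Nat.card_eq_fintype_card, Fintype.card_subtype]

theorem card_filter_altLen_one_eq (n s : ℕ) :
    #{v : Perm (Fin n) | altLen 1 (List.ofFn v) = s} = aCount n s := by
  rw [← card_filter_asLen_eq]
  exact card_equiv (Equiv.mulLeft Fin.revPerm) fun v => by simp [asLen_revPerm_mul]

theorem aCount_succ (n k : ℕ) :
    aCount (n + 1) k = ∑ j ∈ range (n + 1), n.choose j *
      #{p : Perm (Fin j) × Perm (Fin (n - j)) |
        2 * (asLen j p.1 / 2) + 1 + altLen 1 (List.ofFn p.2) = k} := by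
  rw [← card_filter_asLen_eq, ← card_equiv (insertMaxEquiv n) (s := {x |
    2 * (asLen x.1.card x.2.1 / 2) + 1 + altLen 1 (List.ofFn x.2.2) = k}) fun x => by
      simp [insertMaxEquiv, asLen_insertMax]]
  simp only [card_filter, Fintype.sum_sigma]
  rw [← powerset_univ, sum_powerset_apply_card (fun j =>
    ∑ p : Perm (Fin j) × Perm (Fin (n - j)),
      if 2 * (asLen j p.1 / 2) + 1 + altLen 1 (List.ofFn p.2) = k then 1 else 0),
    card_univ, Fintype.card_fin]
  simp only [smul_eq_mul]

theorem aCount_recurrence_general (n k : ℕ) (hk : 1 ≤ k) :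
    aCount 0 0 = 1 ∧
    aCount (n + 1) k =
      ∑ j ∈ Finset.range (n + 1), Nat.choose n j *
        ∑ r ∈ Finset.range ((k - 1) / 2 + 1),
          (aCount j (2 * r) + aCount j (2 * r + 1)) *
            aCount (n - j) (k - 1 - 2 * r) := by
  refine ⟨aCount_zero_zero, ?_⟩
  rw [aCount_succ]
  refine sum_congr rfl fun j _ => ?_
  have hsplit := card_filter_two_mul_div_two_add_one_add_eq (asLen j)
    (fun v : Perm (Fin (n - j)) => altLen 1 (List.ofFn v)) hk
  beta_reduce at hsplit
  rw [hsplit]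
  simp only [card_filter_asLen_eq, card_filter_altLen_one_eq]

theorem aCount_recurrence (n k : ℕ) (hk : 1 ≤ k) (hkn : k ≤ n + 1) :
    aCount 0 0 = 1 ∧
    aCount (n + 1) k =
      ∑ j ∈ Finset.range (n + 1), Nat.choose n j *
        ∑ r ∈ Finset.range ((k - 1) / 2 + 1),
          (aCount j (2 * r) + aCount j (2 * r + 1)) *
            aCount (n - j) (k - 1 - 2 * r) :=
  aCount_recurrence_general n k hk
end

section
/- For n ≥ 1, the number of permutations w of {1,...,n} with as(w) ≤ 2 equals 2^{n-1}. -/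
/-!
An alternating subsequence of length three is a valley `w i > w j < w k` with `i < j < k`, so
`as(w) ≤ 2` means that `w` has no valley. Such a `w` increases up to the position of its maximum
and decreases after it, so it is determined by the set of values placed before the maximum, and
every set of non-maximal values occurs: this gives `2 ^ (n - 1)` permutations.
-/

open Finset

def HasValley {n : ℕ} (w : Equiv.Perm (Fin n)) : Prop :=
  ∃ i j k : Fin n, i < j ∧ j < k ∧ w j < w i ∧ w j < w k

section AlternatingLength

variable {n : ℕ} {w : Equiv.Perm (Fin n)}

lemma hasValley_of_isAlt {l : List ℕ} (hl : l.Sublist (permList n w)) (halt : IsAlt l)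
    (hlen : 3 ≤ l.length) : HasValley w := by
  obtain ⟨a, b, c, rest, rfl⟩ : ∃ a b c rest, l = a :: b :: c :: rest := by
    match l, hlen with
    | a :: b :: c :: rest, _ => exact ⟨a, b, c, rest, rfl⟩
  have hsub : [a, b, c].Sublist ((List.finRange n).map fun i => (w i : ℕ)) :=
    (List.sublist_append_left [a, b, c] rest).trans (List.ofFn_eq_map ▸ hl)
  obtain ⟨_ | ⟨i, _ | ⟨j, _ | ⟨k, _ | ⟨_, _⟩⟩⟩⟩, hidx, heq⟩ := List.sublist_map_iff.mp hsub <;>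
    simp only [List.map_cons, List.map_nil, List.cons.injEq, reduceCtorEq, and_false,
      and_true] at heq
  obtain ⟨rfl, rfl, rfl⟩ := heq
  have hlt := (List.pairwise_lt_finRange n).sublist hidx
  simp only [List.pairwise_cons, List.mem_cons, List.not_mem_nil] at hlt
  have hba := halt 0 (by simp)
  have hbc := halt 1 (by simp)
  simp only [Nat.zero_mod, Nat.one_mod, if_true, one_ne_zero, if_false, List.get_eq_getElem,
    List.getElem_cons_zero, List.getElem_cons_succ, Fin.val_fin_lt] at hba hbc
  exact ⟨i, j, k, hlt.1 j (by simp), hlt.2.1 k (by simp), hba, hbc⟩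

lemma exists_isAlt_sublist_of_hasValley (hw : HasValley w) :
    ∃ l : List ℕ, l.Sublist (permList n w) ∧ IsAlt l ∧ l.length = 3 := by
  obtain ⟨i, j, k, hij, hjk, hji, hjk'⟩ := hw
  have hsorted : [i, j, k].Pairwise (· < ·) := by simp [hij, hjk, hij.trans hjk]
  have hidx : [i, j, k].Sublist (List.finRange n) :=
    List.sublist_of_subperm_of_pairwise
      (List.subperm_of_subset hsorted.nodup fun x _ => List.mem_finRange x) hsorted
      (List.pairwise_lt_finRange n)
  refine ⟨[i, j, k].map fun i => (w i : ℕ), by rw [permList, List.ofFn_eq_map]; exact hidx.map _,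
    ?_, rfl⟩
  intro t ht
  have ht2 : t < 2 := by
    simp only [List.length_map, List.length_cons, List.length_nil] at ht
    omega
  interval_cases t <;> simpa

lemma asLen_le_two_iff : asLen n w ≤ 2 ↔ ¬ HasValley w := by
  constructor
  · intro hle hw
    have hbdd : BddAbove {k | ∃ l : List ℕ, l.Sublist (permList n w) ∧ IsAlt l ∧ l.length = k} :=
      ⟨n, by rintro _ ⟨l, hl, -, rfl⟩; simpa [permList] using hl.length_le⟩
    have := le_csSup hbdd (exists_isAlt_sublist_of_hasValley hw)
    exact absurd (this.trans hle) (by decide)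
  · intro hw
    refine csSup_le' ?_
    rintro _ ⟨l, hl, halt, rfl⟩
    by_contra! hlen
    exact hw (hasValley_of_isAlt hl halt hlen)

end AlternatingLength

lemma Finset.card_filter_lt_lt_card_filter_lt {α : Type*} [Preorder α] [DecidableLT α]
    {t : Finset α} {u v : α} (hu : u ∈ t) (huv : u < v) :
    #{x ∈ t | x < u} < #{x ∈ t | x < v} := by
  refine card_lt_card ((ssubset_iff_of_subset ?_).2 ⟨u, by simp [hu, huv], by simp⟩)
  intro x hx
  simp only [mem_filter] at hx ⊢
  exact ⟨hx.1, hx.2.trans huv⟩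

section Unimodal

variable {m : ℕ}

lemma Equiv.Perm.strictMonoOn_Iic_of_not_hasValley {w : Equiv.Perm (Fin (m + 1))}
    (hw : ¬ HasValley w) : StrictMonoOn w (Set.Iic (w.symm (Fin.last m))) := by
  intro i _ j hj hij
  rcases (Set.mem_Iic.1 hj).lt_or_eq with hjM | rfl
  · have hjtop : w j < Fin.last m := by
      rw [Fin.lt_last_iff_ne_last]
      exact fun h => hjM.ne (by rw [← h, Equiv.symm_apply_apply])
    by_contra! hji
    exact hw ⟨i, j, _, hij, hjM, hji.lt_of_ne (w.injective.ne hij.ne'), by simpa using hjtop⟩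
  · rw [Equiv.apply_symm_apply, Fin.lt_last_iff_ne_last]
    exact fun h => hij.ne (by rw [← h, Equiv.symm_apply_apply])

lemma Equiv.Perm.strictAntiOn_Ici_of_not_hasValley {w : Equiv.Perm (Fin (m + 1))}
    (hw : ¬ HasValley w) : StrictAntiOn w (Set.Ici (w.symm (Fin.last m))) := by
  intro i hi j _ hij
  rcases (Set.mem_Ici.1 hi).lt_or_eq with hMi | rfl
  · have hitop : w i < Fin.last m := by
      rw [Fin.lt_last_iff_ne_last]
      exact fun h => hMi.ne' (by rw [← h, Equiv.symm_apply_apply])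
    by_contra! hij'
    exact hw ⟨_, i, j, hMi, hij, by simpa using hitop, hij'.lt_of_ne (w.injective.ne hij.ne)⟩
  · rw [Equiv.apply_symm_apply, Fin.lt_last_iff_ne_last]
    exact fun h => hij.ne' (by rw [← h, Equiv.symm_apply_apply])

def leftOfMax (w : Equiv.Perm (Fin (m + 1))) : Finset (Fin (m + 1)) :=
  {v | w.symm v < w.symm (Fin.last m)}

lemma last_notMem_leftOfMax (w : Equiv.Perm (Fin (m + 1))) : Fin.last m ∉ leftOfMax w := by
  simp [leftOfMax]

/-- The position of `v` in the permutation listing `s` increasingly, then the other values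
decreasingly; for `Fin.last m ∉ s` this is the unimodal permutation with `leftOfMax = s`. -/
def unimodalPos (s : Finset (Fin (m + 1))) (v : Fin (m + 1)) : ℕ :=
  if v ∈ s then #{u ∈ s | u < v} else m - #{u ∈ sᶜ | u < v}

variable {s : Finset (Fin (m + 1))}

lemma card_filter_compl_lt_le (v : Fin (m + 1)) (hv : v ∉ s) :
    #{u ∈ sᶜ | u < v} + #s ≤ m := by
  have := card_lt_card ((filter_ssubset (p := (· < v))).2 ⟨v, mem_compl.2 hv, lt_irrefl v⟩)
  rw [card_compl, Fintype.card_fin] at this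
  have := card_le_univ s
  simp only [Fintype.card_fin] at this
  omega

lemma unimodalPos_lt_card_iff {v : Fin (m + 1)} :
    unimodalPos s v < #s ↔ v ∈ s := by
  by_cases hv : v ∈ s
  · have hsub := (filter_ssubset (p := (· < v))).2 ⟨v, hv, lt_irrefl v⟩
    simpa [unimodalPos, hv] using card_lt_card hsub
  · have := card_filter_compl_lt_le v hv
    simp only [unimodalPos, hv, if_false, iff_false, not_lt]
    omega

lemma unimodalPos_le (v : Fin (m + 1)) : unimodalPos s v ≤ m := by
  unfold unimodalPos
  split_ifs
  · calc #{u ∈ s | u < v} ≤ #(Iio v) :=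
          card_le_card fun u hu => by simpa using (mem_filter.1 hu).2
      _ ≤ m := by simpa using v.is_le
  · omega

lemma unimodalPos_injective : Function.Injective (unimodalPos s) := by
  refine .of_lt_imp_ne fun u v huv => ?_
  by_cases hu : u ∈ s <;> by_cases hv : v ∈ s
  · simpa [unimodalPos, hu, hv] using (card_filter_lt_lt_card_filter_lt hu huv).ne
  · exact ((unimodalPos_lt_card_iff.2 hu).trans_le
      (not_lt.1 (mt unimodalPos_lt_card_iff.1 hv))).ne
  · exact ((unimodalPos_lt_card_iff.2 hv).trans_le
      (not_lt.1 (mt unimodalPos_lt_card_iff.1 hu))).ne'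
  · have hlt := card_filter_lt_lt_card_filter_lt (mem_compl.2 hu) huv
    have hle := card_filter_compl_lt_le v hv
    simp only [unimodalPos, hu, hv, if_false]
    omega

noncomputable def unimodalPerm (s : Finset (Fin (m + 1))) : Equiv.Perm (Fin (m + 1)) :=
  (Equiv.ofBijective (fun v => (⟨unimodalPos s v, Nat.lt_succ_of_le (unimodalPos_le v)⟩ :
      Fin (m + 1)))
    (Finite.injective_iff_bijective.1 fun _ _ h => unimodalPos_injective (Fin.val_eq_of_eq h))).symm

lemma val_unimodalPerm_symm_apply (v : Fin (m + 1)) :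
    ((unimodalPerm s).symm v : ℕ) = unimodalPos s v := rfl

lemma unimodalPos_last (hs : Fin.last m ∉ s) : unimodalPos s (Fin.last m) = #s := by
  have hfilter : {u ∈ sᶜ | u < Fin.last m} = sᶜ.erase (Fin.last m) := by
    ext u
    simp [Fin.lt_last_iff_ne_last, and_comm]
  have := card_lt_univ_of_notMem hs
  rw [Fintype.card_fin] at this
  simp only [unimodalPos, hs, if_false, hfilter, card_erase_of_mem (mem_compl.2 hs), card_compl,
    Fintype.card_fin]
  omega

lemma leftOfMax_unimodalPerm (hs : Fin.last m ∉ s) : leftOfMax (unimodalPerm s) = s := by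
  ext v
  simp only [leftOfMax, mem_filter, mem_univ, true_and, Fin.lt_def, val_unimodalPerm_symm_apply,
    unimodalPos_last hs, unimodalPos_lt_card_iff]

lemma not_hasValley_unimodalPerm (s : Finset (Fin (m + 1))) : ¬ HasValley (unimodalPerm s) := by
  rintro ⟨i, j, k, hij, hjk, hji, hjk'⟩
  obtain ⟨a, rfl⟩ := (unimodalPerm s).symm.surjective i
  obtain ⟨b, rfl⟩ := (unimodalPerm s).symm.surjective j
  obtain ⟨c, rfl⟩ := (unimodalPerm s).symm.surjective k
  simp only [Equiv.apply_symm_apply, Fin.lt_def, val_unimodalPerm_symm_apply] at hij hjk hji hjk'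
  by_cases hb : b ∈ s
  · have ha : a ∈ s := unimodalPos_lt_card_iff.1 (hij.trans (unimodalPos_lt_card_iff.2 hb))
    have := card_filter_lt_lt_card_filter_lt hb (Fin.lt_def.2 hji)
    simp only [unimodalPos, ha, hb, if_true] at hij
    omega
  · have hc : c ∉ s := fun hc =>
      hb (unimodalPos_lt_card_iff.1 (hjk.trans (unimodalPos_lt_card_iff.2 hc)))
    have := card_filter_lt_lt_card_filter_lt (mem_compl.2 hb) (Fin.lt_def.2 hjk')
    have := card_filter_compl_lt_le c hc
    simp only [unimodalPos, hb, hc, if_false] at hjk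
    omega

lemma unimodalPos_leftOfMax {w : Equiv.Perm (Fin (m + 1))} (hw : ¬ HasValley w)
    (v : Fin (m + 1)) : unimodalPos (leftOfMax w) v = w.symm v := by
  have hmono := w.strictMonoOn_Iic_of_not_hasValley hw
  have hanti := w.strictAntiOn_Ici_of_not_hasValley hw
  set M := w.symm (Fin.last m)
  have hmem : ∀ u, u ∈ leftOfMax w ↔ w.symm u < M := fun u => by simp [leftOfMax, M]
  by_cases hv : v ∈ leftOfMax w
  · have hvM := (hmem v).1 hv
    have hcard : #{u ∈ leftOfMax w | u < v} = #(Iio (w.symm v)) := by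
      refine card_equiv w.symm fun u => ?_
      simp only [mem_filter, hmem, mem_Iio]
      constructor
      · rintro ⟨huM, huv⟩
        rw [← hmono.lt_iff_lt huM.le hvM.le]
        simpa using huv
      · intro h
        exact ⟨h.trans hvM, by simpa using hmono (h.trans hvM).le hvM.le h⟩
    simp [unimodalPos, hv, hcard]
  · have hMv : M ≤ w.symm v := not_lt.1 (mt (hmem v).2 hv)
    have hcard : #{u ∈ (leftOfMax w)ᶜ | u < v} = #(Ioi (w.symm v)) := by
      refine card_equiv w.symm fun u => ?_
      simp only [mem_filter, mem_compl, hmem, not_lt, mem_Ioi]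
      constructor
      · rintro ⟨hMu, huv⟩
        rw [← hanti.lt_iff_gt hMu hMv]
        simpa using huv
      · intro h
        exact ⟨hMv.trans h.le, by simpa using hanti hMv (hMv.trans h.le) h⟩
    have := (w.symm v).is_le
    simp only [unimodalPos, hv, if_false, hcard, Fin.card_Ioi]
    omega

lemma unimodalPerm_leftOfMax {w : Equiv.Perm (Fin (m + 1))} (hw : ¬ HasValley w) :
    unimodalPerm (leftOfMax w) = w := by
  apply Equiv.symm_bijective.injective
  ext v
  rw [val_unimodalPerm_symm_apply, unimodalPos_leftOfMax hw]

noncomputable def valleyFreeEquiv :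
    {w : Equiv.Perm (Fin (m + 1)) // ¬ HasValley w} ≃ {s : Finset (Fin (m + 1)) // Fin.last m ∉ s}
    where
  toFun w := ⟨leftOfMax w.1, last_notMem_leftOfMax w.1⟩
  invFun s := ⟨unimodalPerm s.1, not_hasValley_unimodalPerm s.1⟩
  left_inv w := Subtype.ext (unimodalPerm_leftOfMax w.2)
  right_inv s := Subtype.ext (leftOfMax_unimodalPerm s.2)

lemma card_not_hasValley (m : ℕ) :
    Nat.card {w : Equiv.Perm (Fin (m + 1)) // ¬ HasValley w} = 2 ^ m := by
  have hsets : ({s | Fin.last m ∉ s} : Finset (Finset (Fin (m + 1)))) =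
      (univ.erase (Fin.last m)).powerset := by
    ext s
    simp [subset_erase]
  rw [Nat.card_congr valleyFreeEquiv, Nat.card_eq_fintype_card, Fintype.card_subtype, hsets,
    card_powerset, card_erase_of_mem (mem_univ _), card_univ, Fintype.card_fin, Nat.add_sub_cancel]

end Unimodal

theorem bCount_two (n : ℕ) (hn : 1 ≤ n) : bCount n 2 = 2 ^ (n - 1) := by
  obtain ⟨m, rfl⟩ : ∃ m, n = m + 1 := ⟨n - 1, by omega⟩
  rw [bCount, Nat.card_congr (Equiv.subtypeEquivRight fun w => asLen_le_two_iff),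
    card_not_hasValley, Nat.add_sub_cancel]
end

section
/- For n ≥ 2, the expected value of as(w) over uniformly random w ∈ S_n equals (4n+1)/6; equivalently, Σ_{w ∈ S_n} as(w) = n!·(4n+1)/6. -/
/-!
Scanning left to right, a longest alternating subsequence is found greedily: an entry is kept
exactly when the step to the next entry goes in the currently required direction
(`zigzagLen`), and exchange arguments show that nothing longer exists. For distinct entries
this counts the last entry, the first one if the sequence starts with a descent, and every
interior peak or valley. Relabelling positions shows that the first step is a descent for half
of `S_n`, and that each of three consecutive positions is equally likely to carry the median of
their values, so an interior position is a peak or valley for two thirds of `S_n`. Hence the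
mean is `1 + 1/2 + 2(n - 2)/3 = (4n + 1)/6`.
-/

open Finset Equiv
open scoped List Nat

section Zigzag

variable {α : Type*} [LinearOrder α]

def AltStep : Bool → α → α → Prop
  | true, x, y => y < x
  | false, x, y => x < y

instance (b : Bool) (x y : α) : Decidable (AltStep b x y) := by
  cases b <;> unfold AltStep <;> infer_instance

theorem not_altStep_self (b : Bool) (x : α) : ¬ AltStep b x x := by
  cases b <;> simp [AltStep]

theorem AltStep.asymm {b : Bool} {x y : α} (h : AltStep b x y) : ¬ AltStep (!b) x y := by
  cases b <;> simp only [AltStep, Bool.not_true, Bool.not_false] at h ⊢ <;> exact h.not_gt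

theorem AltStep.trans_not {b : Bool} {x y z : α} (hxy : AltStep b x y)
    (hyz : ¬ AltStep (!b) y z) : AltStep b x z := by
  cases b <;> simp only [AltStep, Bool.not_true, Bool.not_false] at hxy hyz ⊢ <;> order

theorem not_altStep_trans {b : Bool} {x y z : α} (hxy : ¬ AltStep b x y)
    (hyz : ¬ AltStep b y z) : ¬ AltStep b x z := by
  cases b <;> simp only [AltStep] at hxy hyz ⊢ <;> order

theorem altStep_of_not_altStep {b : Bool} {x y z : α} (hxy : ¬ AltStep b x y)
    (hxz : AltStep b x z) : AltStep b y z := by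
  cases b <;> simp only [AltStep] at hxy hxz ⊢ <;> order

theorem altStep_iff_decide_lt {x y : α} (hxy : x ≠ y) (b : Bool) :
    AltStep b x y ↔ decide (y < x) = b := by
  cases b <;> simp [AltStep, hxy.le_iff_lt]

def IsZigzag : Bool → List α → Prop
  | b, x :: y :: t => AltStep b x y ∧ IsZigzag (!b) (y :: t)
  | _, _ => True

theorem isZigzag_iff_getElem {b : Bool} {l : List α} :
    IsZigzag b l ↔
      ∀ i (hi : i + 1 < l.length), AltStep (b == decide (i % 2 = 0)) l[i] l[i + 1] := by
  induction l generalizing b with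
  | nil => simp [IsZigzag]
  | cons x l ih =>
    cases l with
    | nil => simp [IsZigzag]
    | cons y t =>
      have parity (i : ℕ) : ((!b) == decide (i % 2 = 0)) = (b == decide ((i + 1) % 2 = 0)) := by
        rcases Nat.mod_two_eq_zero_or_one i with h | h <;> cases b <;>
          simp [h, Nat.succ_mod_two_eq_zero_iff]
      simp only [IsZigzag, ih, List.length_cons, parity]
      constructor
      · rintro ⟨hxy, h⟩ (_ | i) hi
        · simpa using hxy
        · exact h i (by omega)
      · intro h
        exact ⟨by simpa using h 0 (by omega), fun i hi => h (i + 1) (by omega)⟩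

def zigzagLen : Bool → List α → ℕ
  | _, [] => 0
  | _, [_] => 1
  | b, x :: y :: t => if AltStep b x y then zigzagLen (!b) (y :: t) + 1 else zigzagLen b (y :: t)

theorem zigzagLen_le_zigzagLen_not_add_one (b : Bool) (l : List α) :
    zigzagLen b l ≤ zigzagLen (!b) l + 1 := by
  induction l generalizing b with
  | nil => simp [zigzagLen]
  | cons x l ih =>
    cases l with
    | nil => simp [zigzagLen]
    | cons y t =>
      by_cases h : AltStep b x y
      · simp [zigzagLen, h, h.asymm]
      · by_cases h' : AltStep (!b) x y
        · simp only [zigzagLen, h, h', if_true, if_false, Bool.not_not]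
          omega
        · simpa [zigzagLen, h, h'] using ih b

theorem zigzagLen_le_zigzagLen_cons (b : Bool) (x : α) (l : List α) :
    zigzagLen b l ≤ zigzagLen b (x :: l) := by
  match l with
  | [] => simp [zigzagLen]
  | y :: t =>
    by_cases h : AltStep b x y
    · simpa [zigzagLen, h] using zigzagLen_le_zigzagLen_not_add_one b (y :: t)
    · simp [zigzagLen, h]

theorem length_le_zigzagLen {b : Bool} {s l : List α} (hs : s <+ l) (hz : IsZigzag b s) :
    s.length ≤ zigzagLen b l := by
  induction l generalizing b s with
  | nil => simp [List.sublist_nil.mp hs, zigzagLen]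
  | cons x l ih =>
    cases l with
    | nil => simpa [zigzagLen] using hs.length_le
    | cons y t =>
      rcases List.sublist_cons_iff.mp hs with hst | ⟨s, rfl, hst⟩
      · exact (ih hst hz).trans (zigzagLen_le_zigzagLen_cons b x _)
      rcases s with _ | ⟨z, s⟩
      · exact (ih (List.singleton_sublist.mpr List.mem_cons_self) trivial).trans
          (zigzagLen_le_zigzagLen_cons b x _)
      obtain ⟨hxz, hz⟩ := hz
      by_cases hxy : AltStep b x y
      · simpa [zigzagLen, hxy] using ih hst hz
      -- `x` can be replaced by `y`, which cannot itself be `z`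
      rcases List.sublist_cons_iff.mp hst with hst | ⟨_, hzs, -⟩
      · have hyz : IsZigzag b (y :: z :: s) := ⟨altStep_of_not_altStep hxy hxz, hz⟩
        simpa [zigzagLen, hxy] using ih (hst.cons_cons y) hyz
      · rw [(List.cons_eq_cons.mp hzs).1] at hxz
        exact absurd hxz hxy

-- The head condition is what allows `x` to be prepended in the inductive step.
theorem exists_zigzag_sublist (b : Bool) (l : List α) :
    ∃ s, s <+ l ∧ IsZigzag b s ∧ s.length = zigzagLen b l ∧
      ∀ x ∈ l.head?, ∀ y ∈ s.head?, ¬ AltStep b x y := by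
  induction l generalizing b with
  | nil => exact ⟨[], List.Sublist.slnil, trivial, rfl, by simp⟩
  | cons x l ih =>
    cases l with
    | nil => exact ⟨[x], List.Sublist.refl _, trivial, rfl, by simp [not_altStep_self]⟩
    | cons y t =>
      by_cases hxy : AltStep b x y
      · obtain ⟨s, hs, hz, hlen, hhead⟩ := ih (!b)
        refine ⟨x :: s, hs.cons_cons x, ?_, by simp [zigzagLen, hxy, hlen],
          by simp [not_altStep_self]⟩
        rcases s with _ | ⟨z, s⟩
        · trivial
        · exact ⟨hxy.trans_not (hhead y rfl z rfl), hz⟩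
      · obtain ⟨s, hs, hz, hlen, hhead⟩ := ih b
        refine ⟨s, hs.cons x, hz, by simp [zigzagLen, hxy, hlen], ?_⟩
        simp only [List.head?_cons, Option.mem_def, Option.some.injEq, forall_eq']
        exact fun z hz => not_altStep_trans hxy (hhead y rfl z hz)

theorem isGreatest_zigzagLen (b : Bool) (l : List α) :
    IsGreatest {k | ∃ s, s <+ l ∧ IsZigzag b s ∧ s.length = k} (zigzagLen b l) :=
  let ⟨s, hs, hz, hlen, _⟩ := exists_zigzag_sublist b l
  ⟨⟨s, hs, hz, hlen⟩, by rintro _ ⟨s, hs, hz, rfl⟩; exact length_le_zigzagLen hs hz⟩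

theorem zigzagLen_cons_cons {x y : α} (hxy : x ≠ y) (b : Bool) (t : List α) :
    zigzagLen b (x :: y :: t) =
      (if decide (y < x) = b then 1 else 0) + zigzagLen (!decide (y < x)) (y :: t) := by
  by_cases h : decide (y < x) = b
  · subst h
    simp [zigzagLen, altStep_iff_decide_lt hxy, add_comm]
  · obtain rfl : b = !decide (y < x) := by cases b <;> simp_all
    simp [zigzagLen, altStep_iff_decide_lt hxy]

theorem zigzagLen_ofFn {m : ℕ} (a : Fin (m + 2) → α) (ha : Function.Injective a) (b : Bool) :
    zigzagLen b (List.ofFn a) = 1 + (if decide (a 1 < a 0) = b then 1 else 0) +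
      #{k : Fin m | decide (a k.succ.castSucc < a k.castSucc.castSucc) ≠
        decide (a k.succ.succ < a k.succ.castSucc)} := by
  induction m generalizing b with
  | zero =>
    simp [List.ofFn_succ, zigzagLen_cons_cons (ha.ne (by decide : (0 : Fin 2) ≠ 1)), zigzagLen,
      add_comm]
  | succ m ih =>
    have htail : List.ofFn (fun i => a i.succ) = a 1 :: List.ofFn (fun i => a i.succ.succ) :=
      List.ofFn_succ
    have hrest := ih (fun i => a i.succ) (ha.comp (Fin.succ_injective _)) (!decide (a 1 < a 0))
    simp only [Fin.succ_castSucc] at hrest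
    rw [List.ofFn_succ, htail, zigzagLen_cons_cons (ha.ne (by simp)), ← htail, hrest,
      Fin.card_filter_univ_succ']
    have hturn (p q : Bool) (c : ℕ) :
        (if p = b then 1 else 0) + (1 + (if q = !p then 1 else 0) + c) =
          1 + (if p = b then 1 else 0) + ((if p ≠ q then 1 else 0) + c) := by
      cases p <;> cases q <;> simp <;> omega
    exact hturn _ _ _

end Zigzag

theorem median_indicators_sum_eq_one {α : Type*} [LinearOrder α] {x y z : α} (hxy : x ≠ y)
    (hxz : x ≠ z) (hyz : y ≠ z) :
    ((if decide (y < x) = decide (z < y) then 1 else 0) +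
      (if decide (x < y) = decide (z < x) then 1 else 0) +
        (if decide (z < x) = decide (y < z) then 1 else 0) : ℕ) = 1 := by
  rcases hxy.lt_or_gt with h₁ | h₁ <;> rcases hxz.lt_or_gt with h₂ | h₂ <;>
    rcases hyz.lt_or_gt with h₃ | h₃ <;>
    simp [h₁, h₂, h₃, h₁.not_gt, h₂.not_gt, h₃.not_gt] <;> order

section Counting

variable {ι : Type*} [Fintype ι] [LinearOrder ι]

theorem card_filter_mul_right (σ : Perm ι) (P : Perm ι → Prop) [DecidablePred P] :
    #{w : Perm ι | P (w * σ)} = #{w | P w} :=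
  card_equiv (Equiv.mulRight σ) (by simp)

theorem two_mul_card_filter_lt {p q : ι} (hpq : p ≠ q) :
    2 * #{w : Perm ι | w q < w p} = (Fintype.card ι)! := by
  have hswap : #{w : Perm ι | w p < w q} = #{w : Perm ι | w q < w p} := by
    simpa [Perm.mul_apply, swap_apply_left, swap_apply_right] using
      card_filter_mul_right (swap p q) (fun w => w q < w p)
  have hsplit : #{w : Perm ι | w q < w p} + #{w : Perm ι | w p < w q} = (Fintype.card ι)! := by
    have := card_filter_add_card_filter_not (s := univ) (fun w : Perm ι => w q < w p)
    rw [Finset.card_univ, Fintype.card_perm] at this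
    rw [← this]
    congr 2
    exact filter_congr fun w _ => by simp [((Equiv.injective w).ne hpq).le_iff_lt]
  omega

theorem three_mul_card_filter_median {p q r : ι} (hpq : p ≠ q) (hpr : p ≠ r) (hqr : q ≠ r) :
    3 * #{w : Perm ι | decide (w q < w p) = decide (w r < w q)} = (Fintype.card ι)! := by
  have hp : #{w : Perm ι | decide (w p < w q) = decide (w r < w p)} =
      #{w : Perm ι | decide (w q < w p) = decide (w r < w q)} := by
    simpa [Perm.mul_apply, swap_apply_left, swap_apply_right,
      swap_apply_of_ne_of_ne hpr.symm hqr.symm] using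
      card_filter_mul_right (swap p q) (fun w => decide (w q < w p) = decide (w r < w q))
  have hr : #{w : Perm ι | decide (w r < w p) = decide (w q < w r)} =
      #{w : Perm ι | decide (w q < w p) = decide (w r < w q)} := by
    simpa [Perm.mul_apply, swap_apply_left, swap_apply_right, swap_apply_of_ne_of_ne hpq hpr] using
      card_filter_mul_right (swap q r) (fun w => decide (w q < w p) = decide (w r < w q))
  have hsum : #{w : Perm ι | decide (w q < w p) = decide (w r < w q)} +
      #{w : Perm ι | decide (w p < w q) = decide (w r < w p)} +
        #{w : Perm ι | decide (w r < w p) = decide (w q < w r)} = (Fintype.card ι)! := by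
    simp only [card_filter, ← sum_add_distrib]
    rw [← Fintype.card_perm, ← Finset.card_univ, card_eq_sum_ones]
    exact sum_congr rfl fun w _ =>
      median_indicators_sum_eq_one ((Equiv.injective w).ne hpq) ((Equiv.injective w).ne hpr)
        ((Equiv.injective w).ne hqr)
  omega

theorem three_mul_card_filter_turn {p q r : ι} (hpq : p ≠ q) (hpr : p ≠ r)
    (hqr : q ≠ r) :
    3 * #{w : Perm ι | decide (w q < w p) ≠ decide (w r < w q)} = 2 * (Fintype.card ι)! := by
  have := card_filter_add_card_filter_not (s := univ)
    (fun w : Perm ι => decide (w q < w p) = decide (w r < w q))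
  rw [Finset.card_univ, Fintype.card_perm] at this
  have := three_mul_card_filter_median hpq hpr hqr
  simp only [ne_eq]
  omega

end Counting

theorem isAlt_iff_isZigzag (l : List ℕ) : IsAlt l ↔ IsZigzag true l := by
  rw [isZigzag_iff_getElem]
  refine forall₂_congr fun i hi => ?_
  by_cases h : i % 2 = 0 <;> simp [h, AltStep]

theorem asLen_eq_zigzagLen (n : ℕ) (w : Perm (Fin n)) :
    asLen n w = zigzagLen true (permList n w) := by
  simp only [asLen, isAlt_iff_isZigzag]
  exact (isGreatest_zigzagLen true _).csSup_eq

theorem sum_asLen_eq (m : ℕ) :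
    ∑ w : Perm (Fin (m + 2)), asLen (m + 2) w =
      (m + 2)! + #{w : Perm (Fin (m + 2)) | w 1 < w 0} +
        ∑ k : Fin m, #{w : Perm (Fin (m + 2)) |
          decide (w k.succ.castSucc < w k.castSucc.castSucc) ≠
            decide (w k.succ.succ < w k.succ.castSucc)} := by
  simp only [asLen_eq_zigzagLen, permList]
  rw [sum_congr rfl fun w _ => zigzagLen_ofFn (fun i => (w i : ℕ))
    (Fin.val_injective.comp (Equiv.injective w)) true]
  simp only [sum_add_distrib, card_filter, Fin.val_fin_lt, decide_eq_true_eq, sum_const,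
    Finset.card_univ, Fintype.card_perm, Fintype.card_fin, smul_eq_mul, mul_one]
  exact congrArg _ sum_comm

theorem six_mul_sum_asLen {n : ℕ} (hn : 2 ≤ n) :
    6 * ∑ w : Perm (Fin n), asLen n w = n ! * (4 * n + 1) := by
  obtain ⟨m, rfl⟩ := Nat.exists_eq_add_of_le' hn
  have hdesc := two_mul_card_filter_lt (ι := Fin (m + 2)) (p := 0) (q := 1) (by simp)
  have hturns : 6 * ∑ k : Fin m, #{w : Perm (Fin (m + 2)) |
      decide (w k.succ.castSucc < w k.castSucc.castSucc) ≠
        decide (w k.succ.succ < w k.succ.castSucc)} = m * (4 * (m + 2)!) := by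
    rw [mul_sum, sum_congr rfl fun k _ => ?_, sum_const, Finset.card_univ, Fintype.card_fin,
      smul_eq_mul]
    have := three_mul_card_filter_turn (ι := Fin (m + 2)) (p := k.castSucc.castSucc)
      (q := k.succ.castSucc) (r := k.succ.succ) (by simp [Fin.ext_iff])
      (by simp [Fin.ext_iff]; omega) (by simp [Fin.ext_iff])
    rw [Fintype.card_fin] at this
    omega
  rw [Fintype.card_fin] at hdesc
  rw [sum_asLen_eq, mul_add, mul_add, hturns, show 6 * #{w : Perm (Fin (m + 2)) | w 1 < w 0} =
    3 * (2 * #{w : Perm (Fin (m + 2)) | w 1 < w 0}) by ring, hdesc]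
  ring

theorem asLen_mean (n : ℕ) (hn : 2 ≤ n) :
    (∑ w : Equiv.Perm (Fin n), (asLen n w : ℚ)) / n.factorial
      = (4 * n + 1) / 6 ∧
    6 * ∑ w : Equiv.Perm (Fin n), asLen n w = n.factorial * (4 * n + 1) := by
  have key := six_mul_sum_asLen hn
  have key' : 6 * ∑ w : Equiv.Perm (Fin n), (asLen n w : ℚ) = n.factorial * (4 * n + 1) := by
    exact_mod_cast key
  refine ⟨?_, key⟩
  rw [div_eq_div_iff (by positivity) (by norm_num)]
  linarith
end

section
/- For n ≥ 2, the number of permutations w ∈ S_n with as(w) even equals the number with as(w) odd, both equal to n!/2. -/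
/-- Alternating with direction flag: `true` means next step must be a descent. -/
def Alt : Bool → List ℕ → Prop
  | _, [] => True
  | _, [_] => True
  | true,  a :: b :: t => b < a ∧ Alt false (b :: t)
  | false, a :: b :: t => a < b ∧ Alt true (b :: t)

lemma alt_nil_s9 (b : Bool) : Alt b [] := by cases b <;> trivial

lemma alt_single (b : Bool) (a : ℕ) : Alt b [a] := by cases b <;> trivial

lemma alt_tail {b : Bool} {a : ℕ} {l : List ℕ} (h : Alt b (a :: l)) : Alt (!b) l := by
  cases l with
  | nil => exact alt_nil_s9 _
  | cons c t => cases b <;> exact h.2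

/-- Max length of an alternating sublist with starting direction `b`. -/
noncomputable def altSup (b : Bool) (L : List ℕ) : ℕ :=
  sSup {k | ∃ l : List ℕ, l.Sublist L ∧ Alt b l ∧ l.length = k}

lemma altSet_nonempty (b : Bool) (L : List ℕ) :
    {k | ∃ l : List ℕ, l.Sublist L ∧ Alt b l ∧ l.length = k}.Nonempty :=
  ⟨0, [], List.nil_sublist _, alt_nil_s9 b, rfl⟩

lemma altSet_bdd (b : Bool) (L : List ℕ) :
    BddAbove {k | ∃ l : List ℕ, l.Sublist L ∧ Alt b l ∧ l.length = k} := by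
  refine ⟨L.length, fun k hk => ?_⟩
  obtain ⟨l, hs, _, rfl⟩ := hk
  exact hs.length_le

lemma le_altSup {b : Bool} {L l : List ℕ} (hs : l.Sublist L) (ha : Alt b l) :
    l.length ≤ altSup b L :=
  le_csSup (altSet_bdd b L) ⟨l, hs, ha, rfl⟩

lemma altSup_witness (b : Bool) (L : List ℕ) :
    ∃ l : List ℕ, l.Sublist L ∧ Alt b l ∧ l.length = altSup b L :=
  Nat.sSup_mem (altSet_nonempty b L) (altSet_bdd b L)

lemma altSup_le_succ (b : Bool) (L : List ℕ) : altSup b L ≤ altSup (!b) L + 1 := by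
  obtain ⟨l, hs, ha, hl⟩ := altSup_witness b L
  cases l with
  | nil => simp [← hl]
  | cons a t =>
    have ht : t.Sublist L := (List.sublist_cons_self a t).trans hs
    have := le_altSup ht (alt_tail ha)
    simp only [List.length_cons] at hl
    omega

/-- Main combinatorial step: if the list starts with a descent, the max
descent-starting alternating sublist is one longer than the max
ascent-starting one. -/
lemma altSup_true_eq (x y : ℕ) (t : List ℕ) (hxy : y < x)
    (nd : (x :: y :: t).Nodup) :
    altSup true (x :: y :: t) = altSup false (x :: y :: t) + 1 := by
  set L := x :: y :: t with hL
  refine le_antisymm (by simpa using altSup_le_succ true L) ?_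
  obtain ⟨U, hs, ha, hl⟩ := altSup_witness false L
  rw [← hl]
  have key : ∃ l : List ℕ, l.Sublist L ∧ Alt true l ∧ l.length = U.length + 1 := by
    match U, ha, hs with
    | [], _, _ =>
      exact ⟨[x], by simp [hL], alt_single _ _, rfl⟩
    | [u], _, _ =>
      exact ⟨[x, y], List.cons_sublist_cons.2 (List.cons_sublist_cons.2
        (List.nil_sublist t)), ⟨hxy, alt_single _ _⟩, rfl⟩
    | u1 :: u2 :: r, ⟨h12, hrest⟩, hs =>
      rcases List.sublist_cons_iff.1 hs with hs' | ⟨r1, he1, hs1⟩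
      · -- U <+ y :: t
        rcases List.sublist_cons_iff.1 hs' with hs'' | ⟨r2, he2, hs2⟩
        · -- U <+ t
          have hu1t : u1 ∈ t := hs''.mem (by simp)
          have hxney : x ∉ y :: t := (List.nodup_cons.1 nd).1
          have hxu1 : x ≠ u1 := fun h => hxney (h ▸ List.mem_cons_of_mem _ hu1t)
          rcases lt_or_gt_of_ne hxu1 with hlt | hgt
          · -- x < u1 : replace u1 by x, insert y
            have h2r : (u2 :: r).Sublist t := (List.sublist_cons_self u1 _).trans hs''
            refine ⟨x :: y :: u2 :: r, ?_, ⟨hxy, lt_trans (lt_trans hxy hlt) h12, hrest⟩, rfl⟩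
            exact List.cons_sublist_cons.2 (List.cons_sublist_cons.2 h2r)
          · -- u1 < x : prepend x
            refine ⟨x :: u1 :: u2 :: r, ?_, ⟨hgt, h12, hrest⟩, rfl⟩
            exact List.cons_sublist_cons.2 (hs''.trans (List.sublist_cons_self y t))
        · -- U = y :: r2 : prepend x
          injection he2 with hu1 hr2
          subst hu1
          refine ⟨x :: u1 :: u2 :: r, ?_, ⟨hxy, h12, hrest⟩, rfl⟩
          exact List.cons_sublist_cons.2 (List.cons_sublist_cons.2 (hr2 ▸ hs2))
      · -- U = x :: r1, so u1 = x ; insert y after x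
        injection he1 with hu1 hr1
        subst hu1
        have h2yt : (u2 :: r).Sublist (y :: t) := hr1 ▸ hs1
        have h2t : (u2 :: r).Sublist t := by
          rcases List.sublist_cons_iff.1 h2yt with h | ⟨r2, he2, hs2⟩
          · exact h
          · exfalso
            injection he2 with h' _
            omega
        refine ⟨u1 :: y :: u2 :: r, ?_, ⟨hxy, lt_trans hxy h12, hrest⟩, rfl⟩
        exact List.cons_sublist_cons.2 (List.cons_sublist_cons.2 h2t)
  obtain ⟨l, h1, h2, h3⟩ := key
  exact h3 ▸ le_altSup h1 h2

lemma alt_map_compl (C : ℕ) : ∀ (b : Bool) (l : List ℕ), (∀ z ∈ l, z ≤ C) →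
    (Alt b l ↔ Alt (!b) (l.map (fun z => C - z)))
  | b, [] => fun _ => by simp [alt_nil_s9]
  | b, [a] => fun _ => by
    simp only [List.map_cons, List.map_nil]
    exact ⟨fun _ => alt_single _ _, fun _ => alt_single _ _⟩
  | b, a :: c :: t => fun hb => by
    have ih := alt_map_compl C (!b) (c :: t) (fun z hz => hb z (List.mem_cons_of_mem _ hz))
    rw [Bool.not_not] at ih
    have ha : a ≤ C := hb a (by simp)
    have hc : c ≤ C := hb c (by simp)
    cases b with
    | true =>
      show c < a ∧ Alt false (c :: t) ↔
        C - a < C - c ∧ Alt true ((c :: t).map (fun z => C - z))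
      exact and_congr (by omega) ih
    | false =>
      show a < c ∧ Alt true (c :: t) ↔
        C - c < C - a ∧ Alt false ((c :: t).map (fun z => C - z))
      exact and_congr (by omega) ih

lemma altSup_map_compl {C : ℕ} {b : Bool} {L : List ℕ} (hb : ∀ z ∈ L, z ≤ C) :
    altSup b L = altSup (!b) (L.map (fun z => C - z)) := by
  apply le_antisymm
  · obtain ⟨l, hs, ha, hl⟩ := altSup_witness b L
    rw [← hl]
    have hbl : ∀ z ∈ l, z ≤ C := fun z hz => hb z (hs.mem hz)
    have := (alt_map_compl C b l hbl).1 ha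
    have hlen : (l.map (fun z => C - z)).length = l.length := by simp
    exact hlen ▸ le_altSup (hs.map _) this
  · obtain ⟨l, hs, ha, hl⟩ := altSup_witness (!b) (L.map (fun z => C - z))
    rw [← hl]
    obtain ⟨l', hs', rfl⟩ := List.sublist_map_iff.1 hs
    have hbl : ∀ z ∈ l', z ≤ C := fun z hz => hb z (hs'.mem hz)
    have := (alt_map_compl C b l' hbl).2 ha
    have hlen : (l'.map (fun z => C - z)).length = l'.length := by simp
    exact hlen ▸ le_altSup hs' this

lemma altSup_false_eq (x y : ℕ) (t : List ℕ) (hxy : x < y)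
    (nd : (x :: y :: t).Nodup) (C : ℕ) (hb : ∀ z ∈ x :: y :: t, z ≤ C) :
    altSup false (x :: y :: t) = altSup true (x :: y :: t) + 1 := by
  set L := x :: y :: t with hL
  have hx : x ≤ C := hb x (by simp [hL])
  have hy : y ≤ C := hb y (by simp [hL])
  have h1 : altSup false L = altSup true (L.map (fun z => C - z)) :=
    altSup_map_compl hb
  have h2 : altSup true L = altSup false (L.map (fun z => C - z)) :=
    altSup_map_compl hb
  have hmap : L.map (fun z => C - z) = (C - x) :: (C - y) :: t.map (fun z => C - z) := by
    simp [hL]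
  have hnd : (L.map (fun z => C - z)).Nodup := by
    refine List.Nodup.map_on ?_ nd
    intro a hain bmem hbin heq
    have := hb a hain
    have := hb bmem hbin
    omega
  rw [hmap] at hnd
  have := altSup_true_eq (C - x) (C - y) (t.map (fun z => C - z)) (by omega) hnd
  rw [h1, h2, hmap, this]

/-- For a nodup list with at least two elements, the two alternating maxima
have different parities. -/
lemma altSup_parity (x y : ℕ) (t : List ℕ) (nd : (x :: y :: t).Nodup)
    (C : ℕ) (hb : ∀ z ∈ x :: y :: t, z ≤ C) :
    altSup true (x :: y :: t) % 2 ≠ altSup false (x :: y :: t) % 2 := by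
  have hxy : x ≠ y := by
    intro h
    simp [h] at nd
  rcases lt_or_gt_of_ne hxy with h | h
  · have := altSup_false_eq x y t h nd C hb
    omega
  · have := altSup_true_eq x y t h nd
    omega

/-- The ascent-starting version of `IsAlt`. -/
def IsAlt2 (l : List ℕ) : Prop :=
  ∀ i : ℕ, ∀ hi : i + 1 < l.length,
    if i % 2 = 0 then l.get ⟨i, Nat.lt_of_succ_lt hi⟩ < l.get ⟨i + 1, hi⟩
    else l.get ⟨i + 1, hi⟩ < l.get ⟨i, Nat.lt_of_succ_lt hi⟩

theorem isAlt_iff_alt : ∀ l : List ℕ, (IsAlt l ↔ Alt true l) ∧ (IsAlt2 l ↔ Alt false l)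
  | [] => by
    refine ⟨⟨fun _ => alt_nil_s9 _, fun _ i hi => ?_⟩, ⟨fun _ => alt_nil_s9 _, fun _ i hi => ?_⟩⟩ <;>
      simp at hi
  | [a] => by
    refine ⟨⟨fun _ => alt_single _ _, fun _ i hi => ?_⟩,
      ⟨fun _ => alt_single _ _, fun _ i hi => ?_⟩⟩ <;>
      (simp at hi)
  | a :: c :: t => by
    obtain ⟨ih1, ih2⟩ := isAlt_iff_alt (c :: t)
    constructor
    · constructor
      · intro h
        refine ⟨?_, ih2.mp ?_⟩
        · have := h 0 (by simp)
          simpa using this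
        · intro i hi
          have hi' : (i + 1) + 1 < (a :: c :: t).length := by
            simp only [List.length_cons] at hi ⊢; omega
          have h2 := h (i + 1) hi'
          simp only [List.get_eq_getElem, List.getElem_cons_succ] at h2 ⊢
          by_cases hp : i % 2 = 0
          · have hp' : ¬ (i + 1) % 2 = 0 := by omega
            simpa [hp, hp'] using h2
          · have hp' : (i + 1) % 2 = 0 := by omega
            simpa [hp, hp'] using h2
      · rintro ⟨h1, h2⟩
        intro i hi
        match i with
        | 0 => simpa using h1
        | j + 1 =>
          have hj : j + 1 < (c :: t).length := by
            simp only [List.length_cons] at hi ⊢; omega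
          have h3 := (ih2.mpr h2) j hj
          simp only [List.get_eq_getElem, List.getElem_cons_succ] at h3 ⊢
          by_cases hp : j % 2 = 0
          · have hp' : ¬ (j + 1) % 2 = 0 := by omega
            simpa [hp, hp'] using h3
          · have hp' : (j + 1) % 2 = 0 := by omega
            simpa [hp, hp'] using h3
    · constructor
      · intro h
        refine ⟨?_, ih1.mp ?_⟩
        · have := h 0 (by simp)
          simpa using this
        · intro i hi
          have hi' : (i + 1) + 1 < (a :: c :: t).length := by
            simp only [List.length_cons] at hi ⊢; omega
          have h2 := h (i + 1) hi'
          simp only [List.get_eq_getElem, List.getElem_cons_succ] at h2 ⊢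
          by_cases hp : i % 2 = 0
          · have hp' : ¬ (i + 1) % 2 = 0 := by omega
            simpa [hp, hp'] using h2
          · have hp' : (i + 1) % 2 = 0 := by omega
            simpa [hp, hp'] using h2
      · rintro ⟨h1, h2⟩
        intro i hi
        match i with
        | 0 => simpa using h1
        | j + 1 =>
          have hj : j + 1 < (c :: t).length := by
            simp only [List.length_cons] at hi ⊢; omega
          have h3 := (ih1.mpr h2) j hj
          simp only [List.get_eq_getElem, List.getElem_cons_succ] at h3 ⊢
          by_cases hp : j % 2 = 0
          · have hp' : ¬ (j + 1) % 2 = 0 := by omega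
            simpa [hp, hp'] using h3
          · have hp' : (j + 1) % 2 = 0 := by omega
            simpa [hp, hp'] using h3

lemma asLen_eq_altSup (n : ℕ) (w : Equiv.Perm (Fin n)) :
    asLen n w = altSup true (permList n w) := by
  unfold asLen altSup
  congr 1
  ext k
  exact exists_congr fun l => and_congr_right fun _ =>
    and_congr_left fun _ => (isAlt_iff_alt l).1

lemma permList_trans_rev (n : ℕ) (w : Equiv.Perm (Fin n)) :
    permList n (w.trans Fin.revPerm) = (permList n w).map (fun z => (n - 1) - z) := by
  unfold permList
  rw [List.map_ofFn]
  congr 1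
  funext i
  show ((Fin.rev (w i) : Fin n) : ℕ) = n - 1 - (w i : ℕ)
  rw [Fin.val_rev]
  omega

lemma permList_bound (n : ℕ) (w : Equiv.Perm (Fin n)) :
    ∀ z ∈ permList n w, z ≤ n - 1 := by
  intro z hz
  unfold permList at hz
  rw [List.mem_ofFn] at hz
  obtain ⟨i, rfl⟩ := hz
  show ((w i : ℕ)) ≤ n - 1
  have := (w i).isLt
  omega

lemma permList_nodup (n : ℕ) (w : Equiv.Perm (Fin n)) : (permList n w).Nodup :=
  List.nodup_ofFn.mpr (Fin.val_injective.comp w.injective)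

lemma asLen_trans_rev (n : ℕ) (w : Equiv.Perm (Fin n)) :
    asLen n (w.trans Fin.revPerm) = altSup false (permList n w) := by
  rw [asLen_eq_altSup, permList_trans_rev]
  have h := altSup_map_compl (C := n - 1) (b := false) (L := permList n w)
    (permList_bound n w)
  simp only [Bool.not_false] at h
  exact h.symm

lemma asLen_parity_key (n : ℕ) (hn : 2 ≤ n) (w : Equiv.Perm (Fin n)) :
    asLen n w % 2 = 0 ↔ asLen n (w.trans Fin.revPerm) % 2 = 1 := by
  rw [asLen_eq_altSup, asLen_trans_rev]
  have hlen : (permList n w).length = n := by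
    unfold permList; simp
  have key : altSup true (permList n w) % 2 ≠ altSup false (permList n w) % 2 := by
    rcases hL : permList n w with _ | ⟨x, _ | ⟨y, t⟩⟩
    · rw [hL] at hlen; simp at hlen; omega
    · rw [hL] at hlen; simp at hlen; omega
    · exact altSup_parity x y t (hL ▸ permList_nodup n w) (n - 1)
        (hL ▸ permList_bound n w)
  have h1 := Nat.mod_two_eq_zero_or_one (altSup true (permList n w))
  have h2 := Nat.mod_two_eq_zero_or_one (altSup false (permList n w))
  omega

lemma trans_rev_trans_rev (n : ℕ) (w : Equiv.Perm (Fin n)) :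
    (w.trans Fin.revPerm).trans Fin.revPerm = w := by
  ext i
  simp [Fin.rev_rev]

theorem asLen_parity_equidistributed (n : ℕ) (hn : 2 ≤ n) :
    Nat.card {w : Equiv.Perm (Fin n) // asLen n w % 2 = 0} =
      Nat.card {w : Equiv.Perm (Fin n) // asLen n w % 2 = 1} ∧
    2 * Nat.card {w : Equiv.Perm (Fin n) // asLen n w % 2 = 0} =
      n.factorial := by
  classical
  have key := asLen_parity_key n hn
  have e : {w : Equiv.Perm (Fin n) // asLen n w % 2 = 0} ≃
      {w : Equiv.Perm (Fin n) // asLen n w % 2 = 1} :=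
    { toFun := fun w => ⟨w.1.trans Fin.revPerm, (key w.1).1 w.2⟩
      invFun := fun w => ⟨w.1.trans Fin.revPerm, by
        have h1 := key (w.1.trans Fin.revPerm)
        rw [trans_rev_trans_rev] at h1
        have h2 := w.2
        have h3 := Nat.mod_two_eq_zero_or_one (asLen n (w.1.trans Fin.revPerm))
        omega⟩
      left_inv := fun w => Subtype.ext (trans_rev_trans_rev n w.1)
      right_inv := fun w => Subtype.ext (trans_rev_trans_rev n w.1) }
  have hcard := Nat.card_congr e
  refine ⟨hcard, ?_⟩
  have h1 : Nat.card {w : Equiv.Perm (Fin n) // asLen n w % 2 = 1} =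
      Nat.card {w : Equiv.Perm (Fin n) // ¬ (asLen n w % 2 = 0)} :=
    Nat.card_congr (Equiv.subtypeEquivRight (fun w => by omega))
  have h2 : Nat.card {w : Equiv.Perm (Fin n) // asLen n w % 2 = 0} +
      Nat.card {w : Equiv.Perm (Fin n) // ¬ (asLen n w % 2 = 0)} =
      Nat.card (Equiv.Perm (Fin n)) := by
    simp only [Nat.card_eq_fintype_card]
    rw [Fintype.card_subtype_compl]
    have := Fintype.card_subtype_le (fun w : Equiv.Perm (Fin n) => asLen n w % 2 = 0)
    omega
  have h3 : Nat.card (Equiv.Perm (Fin n)) = n.factorial := by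
    rw [Nat.card_eq_fintype_card, Fintype.card_perm, Fintype.card_fin]
  omega
end

section
/- For n ≥ 2, swapping the last two entries of a permutation w = w_1...w_n ∈ S_n changes as(w) by exactly 1 (it either increases or decreases as by 1). -/
/-!
Record the comparisons of consecutive entries of a list as its descent word `D` (`true` for a
descent). The descent word of a subsequence is a subword of `D`, and that of an alternating
subsequence alternates and starts with a descent; conversely the turning points of a list with
distinct entries form an alternating subsequence. Hence `as(w)` is the number of runs of the word
`false :: D`, i.e. one more than the number of letter changes in it.

Swapping the last two entries only replaces the last two letters `u d` of `D` by some `u' (!d)`.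
The number of changes these two letters contribute after a letter `e` is `≡ [d ≠ e]` mod 2, so its
parity flips; and it cannot jump between 0 and 2, which would need `d = e = !d`.
-/

namespace AlternatingSubseq

def Step (b : Bool) (x y : ℕ) : Prop := if b then y < x else x < y

def IsAltFrom : Bool → List ℕ → Prop
  | _, [] => True
  | _, [_] => True
  | b, x :: y :: t => Step b x y ∧ IsAltFrom (!b) (y :: t)

def descent (x y : ℕ) : Bool := decide (y < x)

def descentWord (l : List ℕ) : List Bool := List.zipWith descent l l.tail

def numChanges : Bool → List Bool → ℕ
  | _, [] => 0
  | b, d :: D => (if d = b then 0 else 1) + numChanges d D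

theorem Step.trans {b : Bool} {x y z : ℕ} (hxy : Step b x y) (hyz : Step b y z) : Step b x z := by
  cases b <;> simp only [Step, ↓reduceIte, Bool.false_eq_true] at * <;> omega

theorem Step.descent_eq {b : Bool} {x y : ℕ} (h : Step b x y) : descent x y = b := by
  cases b <;> simp only [Step, descent, ↓reduceIte, Bool.false_eq_true, decide_eq_true_eq,
    decide_eq_false_iff_not] at h ⊢ <;> omega

theorem step_descent {x y : ℕ} (h : x ≠ y) : Step (descent x y) x y := by
  rcases h.lt_or_gt with hxy | hxy <;> simp [Step, descent, hxy, hxy.not_gt]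

theorem descent_swap {x y : ℕ} (h : x ≠ y) : descent y x = !descent x y := by
  rcases h.lt_or_gt with hxy | hxy <;> simp [descent, hxy, hxy.not_gt]

theorem isAltFrom_iff_getElem : ∀ (b : Bool) (l : List ℕ), IsAltFrom b l ↔
    ∀ i (hi : i + 1 < l.length), Step (if i % 2 = 0 then b else !b) l[i] l[i + 1]
  | b, [] => by simp [IsAltFrom]
  | b, [x] => by simp [IsAltFrom]
  | b, x :: y :: t => by
    rw [IsAltFrom, isAltFrom_iff_getElem (!b) (y :: t)]
    constructor
    · rintro ⟨h0, h⟩ (_ | i) hi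
      · simpa using h0
      · have := h i (by simpa using hi)
        rcases Nat.mod_two_eq_zero_or_one i with hi2 | hi2 <;> simp_all [Nat.add_mod]
    · intro h
      exact ⟨by simpa using h 0 (by simp), fun i hi => by
        have := h (i + 1) (by simpa using hi)
        rcases Nat.mod_two_eq_zero_or_one i with hi2 | hi2 <;> simp_all [Nat.add_mod]⟩

theorem isAlt_iff_isAltFrom (l : List ℕ) : IsAlt l ↔ IsAltFrom true l := by
  simp [isAltFrom_iff_getElem, IsAlt, Step]

@[simp] theorem descentWord_nil : descentWord [] = [] := rfl

@[simp] theorem descentWord_singleton (x : ℕ) : descentWord [x] = [] := rfl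

@[simp] theorem descentWord_cons_cons (x y : ℕ) (t : List ℕ) :
    descentWord (x :: y :: t) = descent x y :: descentWord (y :: t) := rfl

@[simp] theorem length_descentWord (l : List ℕ) : (descentWord l).length = l.length - 1 := by
  simp [descentWord]

theorem descentWord_sublist_cons (x : ℕ) (l : List ℕ) :
    (descentWord l).Sublist (descentWord (x :: l)) := by
  cases l <;> simp

theorem descentWord_append_cons : ∀ (l : List ℕ) (x : ℕ) (t : List ℕ),
    descentWord (l ++ x :: t) = descentWord (l ++ [x]) ++ descentWord (x :: t)
  | [], _, _ => rfl
  | [_], _, _ => rfl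
  | y :: z :: l, x, t => by
    have ih := descentWord_append_cons (z :: l) x t
    simp only [List.cons_append, descentWord_cons_cons] at ih ⊢
    rw [ih]

-- Between two entries of `s`, the comparison is witnessed by a consecutive pair of `l`.
theorem descentWord_sublist {s l : List ℕ} (h : s.Sublist l) :
    (descentWord s).Sublist (descentWord l) ∧
      ∀ x, (descentWord (x :: s)).Sublist (descentWord (x :: l)) := by
  induction h with
  | slnil => exact ⟨.refl _, fun _ => .refl _⟩
  | @cons s l y _ ih =>
    have hsub := ih.1.trans (descentWord_sublist_cons y l)
    refine ⟨hsub, fun x => ?_⟩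
    rcases s with _ | ⟨z, s⟩
    · simp
    rw [descentWord_cons_cons, descentWord_cons_cons]
    by_cases hd : descent x z = descent x y
    · exact hd ▸ hsub.cons_cons _
    · have : descent y z = descent x z := by
        simp only [descent, decide_eq_decide] at hd ⊢; omega
      exact .cons _ (this ▸ ih.2 y)
  | @cons_cons s l y _ ih =>
    refine ⟨ih.2 y, fun x => ?_⟩
    rw [descentWord_cons_cons, descentWord_cons_cons]
    exact (ih.2 y).cons_cons _

theorem IsAltFrom.isChain_descentWord : ∀ {b : Bool} {s : List ℕ}, IsAltFrom b s →
    ((!b) :: descentWord s).IsChain (· ≠ ·)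
  | _, [], _ => by simp
  | _, [_], _ => by simp
  | b, x :: y :: t, ⟨hxy, ht⟩ => by
    have := ht.isChain_descentWord
    rw [Bool.not_not] at this
    rw [descentWord_cons_cons, hxy.descent_eq, List.isChain_cons_cons]
    exact ⟨by simp, this⟩

theorem numChanges_cons (b d : Bool) (D : List Bool) :
    numChanges b (d :: D) = (if d = b then 0 else 1) + numChanges d D := rfl

theorem numChanges_append (E : List Bool) : ∀ (b : Bool) (D : List Bool),
    numChanges b (D ++ E) = numChanges b D + numChanges (D.getLastD b) E
  | _, [] => by simp [numChanges]
  | b, d :: D => by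
    simp only [List.cons_append, numChanges_cons, numChanges_append E d D, List.getLastD_cons]
    omega

theorem length_destutter'_ne : ∀ (b : Bool) (D : List Bool),
    (D.destutter' (· ≠ ·) b).length = numChanges b D + 1
  | _, [] => rfl
  | b, d :: D => by
    rw [numChanges_cons, List.destutter'_cons]
    by_cases h : d = b
    · subst h; simp [length_destutter'_ne d D]
    · rw [if_pos (Ne.symm h), if_neg h, List.length_cons, length_destutter'_ne d D]; omega

theorem IsAltFrom.length_le_numChanges {s l : List ℕ} (hs : s.Sublist l)
    (ha : IsAltFrom true s) :
    s.length ≤ numChanges false (descentWord l) + 1 := by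
  rcases eq_or_ne s [] with rfl | hne
  · simp
  calc s.length = (false :: descentWord s).length := by
        simp only [List.length_cons, length_descentWord]; have := List.length_pos_iff.2 hne; omega
    _ ≤ ((false :: descentWord l).destutter (· ≠ ·)).length :=
        ha.isChain_descentWord.length_le_length_destutter_ne
          ((descentWord_sublist hs).1.cons_cons _)
    _ = numChanges false (descentWord l) + 1 := length_destutter'_ne _ _

-- The last conjunct lets the recursion prepend a turning point to `s`.
theorem exists_isAltFrom_sublist :
    ∀ (l : List ℕ), l ≠ [] → l.IsChain (· ≠ ·) → ∀ b : Bool,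
    ∃ s, s.Sublist l ∧ IsAltFrom (!b) s ∧ s.length = numChanges b (descentWord l) + 1 ∧
      ∀ x, Step b x l.headI → IsAltFrom b (x :: s)
  | [x], _, _, b => ⟨[x], .refl _, trivial, rfl, fun _ h => ⟨h, trivial⟩⟩
  | x :: y :: t, _, hl, b => by
    obtain ⟨hxy, ht⟩ := List.isChain_cons_cons.mp hl
    obtain ⟨s, hs, hsalt, hslen, hsext⟩ :=
      exists_isAltFrom_sublist (y :: t) (List.cons_ne_nil _ _) ht (descent x y)
    by_cases hd : descent x y = b
    · subst hd
      exact ⟨s, hs.cons x, hsalt, by simp [numChanges_cons, hslen],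
        fun x' h => hsext x' (h.trans (step_descent hxy))⟩
    · have hb : descent x y = !b := by cases b <;> simpa using hd
      have hxs : IsAltFrom (!b) (x :: s) := hb ▸ hsext x (step_descent hxy)
      refine ⟨x :: s, hs.cons_cons x, hxs, ?_, fun x' h => ⟨h, hxs⟩⟩
      rw [descentWord_cons_cons, numChanges_cons, if_neg hd, List.length_cons, hslen]
      omega

noncomputable def altLen (l : List ℕ) : ℕ :=
  sSup {k | ∃ s, s.Sublist l ∧ IsAlt s ∧ s.length = k}

theorem altLen_eq_numChanges {l : List ℕ} (hne : l ≠ []) (hl : l.IsChain (· ≠ ·)) :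
    altLen l = numChanges false (descentWord l) + 1 := by
  obtain ⟨s, hs, ha, hlen, -⟩ := exists_isAltFrom_sublist l hne hl false
  refine IsGreatest.csSup_eq ⟨⟨s, hs, (isAlt_iff_isAltFrom s).2 ha, hlen⟩, ?_⟩
  rintro _ ⟨s, hs, ha, rfl⟩
  exact ((isAlt_iff_isAltFrom s).1 ha).length_le_numChanges hs

theorem numChanges_pair_flip (e u u' d : Bool) :
    numChanges e [u', !d] = numChanges e [u, d] + 1 ∨
      numChanges e [u, d] = numChanges e [u', !d] + 1 := by
  revert e u u' d; decide

theorem altLen_append_swap {p : List ℕ} {a b : ℕ} (h : (p ++ [a, b]).Nodup) :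
    altLen (p ++ [b, a]) = altLen (p ++ [a, b]) + 1 ∨
      altLen (p ++ [a, b]) = altLen (p ++ [b, a]) + 1 := by
  have h' : (p ++ [b, a]).Nodup := ((List.Perm.swap a b []).append_left p).nodup_iff.2 h
  have hab : a ≠ b := by simpa using (List.nodup_append.1 h).2.1
  rw [altLen_eq_numChanges (by simp) h.isChain, altLen_eq_numChanges (by simp) h'.isChain]
  rcases p.eq_nil_or_concat' with rfl | ⟨r, c, rfl⟩
  · simp only [List.nil_append, descentWord_cons_cons, descentWord_singleton, descent_swap hab]
    cases descent a b <;> simp [numChanges]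
  · simp only [List.append_assoc, List.singleton_append]
    rw [descentWord_append_cons r c [a, b], descentWord_append_cons r c [b, a]]
    simp only [descentWord_cons_cons, descentWord_singleton, numChanges_append, descent_swap hab]
    rcases numChanges_pair_flip ((descentWord (r ++ [c])).getLastD false) (descent c a)
      (descent c b) (descent a b) with h | h <;> omega

theorem permList_eq_append {m : ℕ} (w : Equiv.Perm (Fin (m + 2))) :
    permList (m + 2) w = List.ofFn (fun i : Fin m => (w i.castSucc.castSucc : ℕ)) ++
      [(w (Fin.last m).castSucc : ℕ), (w (Fin.last (m + 1)) : ℕ)] := by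
  rw [permList, List.ofFn_succ', List.ofFn_succ']
  simp

theorem permList_mul_swap_eq_append {m : ℕ} (w : Equiv.Perm (Fin (m + 2))) :
    permList (m + 2) (w * Equiv.swap (Fin.last m).castSucc (Fin.last (m + 1))) =
      List.ofFn (fun i : Fin m => (w i.castSucc.castSucc : ℕ)) ++
        [(w (Fin.last (m + 1)) : ℕ), (w (Fin.last m).castSucc : ℕ)] := by
  rw [permList_eq_append]
  simp [Equiv.swap_apply_of_ne_of_ne]

end AlternatingSubseq

open AlternatingSubseq

/-- Swapping the last two entries of `w` changes `as(w)` by exactly 1. -/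
theorem asLen_swap_last_two (n : ℕ) (hn : 2 ≤ n) (w : Equiv.Perm (Fin n)) :
    asLen n (w * Equiv.swap (⟨n - 2, by omega⟩ : Fin n) ⟨n - 1, by omega⟩)
        = asLen n w + 1 ∨
      asLen n w
        = asLen n (w * Equiv.swap (⟨n - 2, by omega⟩ : Fin n) ⟨n - 1, by omega⟩)
            + 1 := by
  obtain ⟨m, rfl⟩ : ∃ m, n = m + 2 := ⟨n - 2, by omega⟩
  set σ := Equiv.swap (Fin.last m).castSucc (Fin.last (m + 1))
  change altLen (permList (m + 2) (w * σ)) = altLen (permList (m + 2) w) + 1 ∨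
    altLen (permList (m + 2) w) = altLen (permList (m + 2) (w * σ)) + 1
  have hnodup : (permList (m + 2) w).Nodup :=
    List.nodup_ofFn.2 (Fin.val_injective.comp w.injective)
  rw [permList_mul_swap_eq_append, permList_eq_append] at *
  exact altLen_append_swap hnodup
end

section
/- For n ≥ 2, T_n(t) = (1/2)(1+t) G_n(t), where T_n(t) = Σ_k a_k(n) t^k and G_n(t) = Σ_k g_k(n) t^k. -/
/-- The number of alternating runs (maximal monotone consecutive blocks) of `w`:
for `n ≥ 2` it is `1 +` the number of interior turning points. -/
def runCount (n : ℕ) (w : Equiv.Perm (Fin n)) : ℕ :=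
  let l := permList n w
  if n ≤ 1 then n
  else 1 + ((Finset.range (n - 2)).filter (fun i =>
    (l[i]! < l[i+1]! ∧ l[i+2]! < l[i+1]!) ∨
    (l[i+1]! < l[i]! ∧ l[i+1]! < l[i+2]!))).card

/-- `gCount n k = #{w ∈ S_n : w has exactly k alternating runs}`. -/
noncomputable def gCount (n k : ℕ) : ℕ :=
  Nat.card {w : Equiv.Perm (Fin n) // runCount n w = k}

namespace List

variable {α β : Type*} [LinearOrder α] [LinearOrder β]

def Step (desc : Bool) (a b : α) : Prop := if desc then b < a else a < b

def Alternating : Bool → List α → Prop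
  | desc, a :: b :: t => Step desc a b ∧ Alternating (!desc) (b :: t)
  | _, _ => True

def turns : List α → ℕ
  | a :: b :: c :: t =>
      (if (a < b ∧ c < b) ∨ (b < a ∧ b < c) then 1 else 0) + turns (b :: c :: t)
  | _ => 0

section Step

variable {desc : Bool} {a b c : α}

@[simp] lemma step_true : Step true a b ↔ b < a := Iff.rfl

@[simp] lemma step_false : Step false a b ↔ a < b := Iff.rfl

lemma step_not : Step (!desc) a b ↔ Step desc b a := by
  cases desc <;> rfl

lemma step_decide_lt (hab : a ≠ b) : Step (decide (b < a)) a b := by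
  cases h : decide (b < a) <;> simp_all [lt_of_le_of_ne]

lemma Step.decide_lt_eq (h : Step desc a b) : decide (b < a) = desc := by
  cases desc <;> simp_all [le_of_lt]

lemma Step.trans (hab : Step desc a b) (hbc : Step desc b c) : Step desc a c := by
  cases desc <;> simp_all <;> order

end Step

@[simp] lemma alternating_nil (desc : Bool) : Alternating desc ([] : List α) := trivial

@[simp] lemma alternating_singleton (desc : Bool) (a : α) : Alternating desc [a] := trivial

@[simp] lemma alternating_cons_cons {desc : Bool} {a b : α} {t : List α} :
    Alternating desc (a :: b :: t) ↔ Step desc a b ∧ Alternating (!desc) (b :: t) := Iff.rfl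

lemma turns_cons_cons_cons {a b c : α} {t : List α} (hab : a ≠ b) (hbc : b ≠ c) :
    turns (a :: b :: c :: t) =
      (if decide (b < a) = decide (c < b) then 0 else 1) + turns (b :: c :: t) := by
  rcases hab.lt_or_gt with hab | hab <;> rcases hbc.lt_or_gt with hbc | hbc <;>
    simp [turns, hab, hbc, hab.not_gt, hbc.not_gt]

lemma Alternating.tail {desc : Bool} {a : α} {l : List α} (h : (a :: l).Alternating desc) :
    l.Alternating (!desc) := by
  cases l with
  | nil => trivial
  | cons b t => exact h.2

theorem turns_le_length_sub_two : ∀ l : List α, turns l ≤ l.length - 2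
  | a :: b :: c :: t => by
    have := turns_le_length_sub_two (b :: c :: t)
    simp only [turns, length_cons] at this ⊢
    split <;> omega
  | [] | [_] | [_, _] => le_rfl

theorem turns_map_of_strictMono {f : α → β} (hf : StrictMono f) : ∀ l : List α,
    turns (l.map f) = turns l
  | a :: b :: c :: t => by
    have ih := turns_map_of_strictMono hf (b :: c :: t)
    simp only [map_cons, turns, hf.lt_iff_lt] at ih ⊢
    rw [ih]
  | [] | [_] | [_, _] => rfl

theorem turns_map_of_strictAnti {f : α → β} (hf : StrictAnti f) : ∀ l : List α,
    turns (l.map f) = turns l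
  | a :: b :: c :: t => by
    have ih := turns_map_of_strictAnti hf (b :: c :: t)
    simp only [map_cons, turns, hf.lt_iff_gt, or_comm] at ih ⊢
    rw [ih]
  | [] | [_] | [_, _] => rfl

theorem length_le_of_alternating_sublist {desc : Bool} {s : List α} {a b : α} {t : List α}
    (hne : (a :: b :: t).IsChain (· ≠ ·)) (hs : s <+ a :: b :: t) (halt : s.Alternating desc) :
    s.length ≤ 1 + turns (a :: b :: t) + if decide (b < a) = desc then 1 else 0 := by
  induction t generalizing a b s desc with
  | nil =>
    rcases hs.length_le.lt_or_eq with hlt | heq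
    · simp only [length_cons, length_nil] at hlt
      omega
    · obtain rfl := hs.eq_of_length heq
      simp [turns, halt.1.decide_lt_eq]
  | cons c t ih =>
    simp only [isChain_cons_cons] at hne ih
    obtain ⟨hab, hbc, hne⟩ := hne
    rw [turns_cons_cons_cons hab hbc]
    rcases sublist_cons_iff.mp hs with hs | ⟨_ | ⟨x, r⟩, rfl, hr⟩
    · have := ih ⟨hbc, hne⟩ hs halt
      generalize decide (b < a) = e at *
      generalize decide (c < b) = f at *
      cases e <;> cases f <;> cases desc <;>
        simp only [Bool.true_eq_false, Bool.false_eq_true, reduceIte] at this ⊢ <;> omega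
    · simp only [length_singleton]
      omega
    · obtain ⟨hax, halt⟩ := halt
      by_cases hdir : decide (b < a) = desc
      · have := ih ⟨hbc, hne⟩ hr halt
        simp only [hdir, length_cons] at this ⊢
        generalize decide (c < b) = f at *
        cases f <;> cases desc <;>
          simp only [Bool.true_eq_false, Bool.false_eq_true, reduceIte, Bool.not_true,
            Bool.not_false] at this ⊢ <;> omega
      · -- `s` starts against the list's first step `a → b`, so `b` can replace `a` in it.
        have hba : Step desc b a := by
          rw [← step_not, Bool.eq_not.mpr (Ne.symm hdir), Bool.not_not]
          exact step_decide_lt hab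
        have hr' : x :: r <+ c :: t := by
          rcases sublist_cons_iff.mp hr with hr | ⟨r', hxb, _⟩
          · exact hr
          · obtain rfl := head_eq_of_cons_eq hxb
            exact absurd hax.decide_lt_eq hdir
        have := ih ⟨hbc, hne⟩ (hr'.cons_cons b) ⟨hba.trans hax, halt⟩
        simp only [length_cons] at this ⊢
        generalize decide (b < a) = e at *
        generalize decide (c < b) = f at *
        cases e <;> cases f <;> cases desc <;>
          simp only [Bool.true_eq_false, Bool.false_eq_true, reduceIte, not_true_eq_false]
            at this hdir ⊢ <;> omega

theorem exists_alternating_sublist {a b : α} {t : List α}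
    (hne : (a :: b :: t).IsChain (· ≠ ·)) :
    ∃ r, a :: r <+ a :: b :: t ∧ (a :: r).Alternating (decide (b < a)) ∧
      r.length = turns (a :: b :: t) + 1 := by
  induction t generalizing a b with
  | nil =>
    simp only [isChain_cons_cons, isChain_singleton, and_true] at hne
    exact ⟨[b], Sublist.refl _, ⟨step_decide_lt hne, trivial⟩, rfl⟩
  | cons c t ih =>
    simp only [isChain_cons_cons] at hne ih
    obtain ⟨hab, hbc, hne⟩ := hne
    obtain ⟨r, hr, halt, hlen⟩ := ih ⟨hbc, hne⟩
    rw [turns_cons_cons_cons hab hbc]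
    by_cases hturn : decide (b < a) = decide (c < b)
    · obtain ⟨y, r, rfl⟩ := exists_cons_of_length_eq_add_one hlen
      obtain ⟨hby, halt⟩ := halt
      refine ⟨y :: r, (sublist_of_cons_sublist hr).cons_cons a, ⟨?_, ?_⟩,
        by simpa [hturn] using hlen⟩
      · exact (step_decide_lt hab).trans (hturn ▸ hby)
      · rwa [hturn]
    · refine ⟨b :: r, hr.cons_cons a, ⟨step_decide_lt hab, ?_⟩, ?_⟩
      · rwa [← Bool.eq_not.mpr (Ne.symm hturn)]
      · simp only [hturn, hlen, length_cons, reduceIte]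
        omega

lemma alternating_iff_forall_getElem {desc : Bool} {l : List α} :
    l.Alternating desc ↔
      ∀ i (hi : i + 1 < l.length), Step (if i % 2 = 0 then desc else !desc) l[i] l[i + 1] := by
  induction l generalizing desc with
  | nil => simp
  | cons a l ih =>
    cases l with
    | nil => simp
    | cons b t =>
      have hpar (i : ℕ) : (if (i + 1) % 2 = 0 then desc else !desc) =
          if i % 2 = 0 then !desc else desc := by
        rcases Nat.mod_two_eq_zero_or_one i with h | h <;> simp [h, Nat.succ_mod_two_eq_zero_iff]
      rw [alternating_cons_cons, ih, Bool.not_not]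
      constructor
      · rintro ⟨h0, h⟩ (_ | i) hi
        · simpa using h0
        · rw [hpar]
          exact h i (Nat.lt_of_succ_lt_succ hi)
      · intro h
        refine ⟨by simpa using h 0 (by simp), fun i hi => ?_⟩
        have hi' := h (i + 1) (Nat.succ_lt_succ hi)
        rw [hpar] at hi'
        exact hi'

theorem card_filter_turn_eq_turns [Inhabited α] : ∀ l : List α,
    ((Finset.range (l.length - 2)).filter (fun i =>
      (l[i]! < l[i+1]! ∧ l[i+2]! < l[i+1]!) ∨ (l[i+1]! < l[i]! ∧ l[i+1]! < l[i+2]!))).card =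
      turns l
  | a :: b :: c :: t => by
    have hlen : (a :: b :: c :: t).length - 2 = t.length + 1 := by simp
    rw [turns, ← card_filter_turn_eq_turns (b :: c :: t), Finset.card_filter, Finset.card_filter,
      hlen, Finset.sum_range_succ', add_comm]
    simp only [getElem!_cons_succ, getElem!_cons_zero, length_cons]
    rfl
  | [] | [_] | [_, _] => by simp [turns]

end List

open List Polynomial

theorem sum_range_natCard_fiber_mul_X_pow {ι R : Type*} [Fintype ι] [CommSemiring R]
    (f : ι → ℕ) {N : ℕ} (hf : ∀ i, f i < N) :
    ∑ k ∈ Finset.range N, C (Nat.card {i // f i = k} : R) * X ^ k =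
      ∑ i, (X : R[X]) ^ f i := by
  classical
  rw [← Finset.sum_fiberwise_of_maps_to (g := f) (t := Finset.range N)
    (fun i _ => Finset.mem_range.mpr (hf i))]
  refine Finset.sum_congr rfl fun k _ => ?_
  rw [Finset.sum_congr rfl fun i hi => by rw [(Finset.mem_filter.mp hi).2],
    Finset.sum_const, nsmul_eq_mul, Nat.card_eq_fintype_card, Fintype.card_subtype, map_natCast]

theorem two_mul_sum_mul_ite_of_equiv {ι R : Type*} [Fintype ι] [CommSemiring R] (e : ι ≃ ι)
    (g : ι → R) (p : ι → Prop) [DecidablePred p] (hg : ∀ i, g (e i) = g i)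
    (hp : ∀ i, p (e i) ↔ ¬ p i) (x y : R) :
    2 * ∑ i, g i * (if p i then x else y) = (y + x) * ∑ i, g i := by
  have hswap : ∑ i, g i * (if p i then x else y) = ∑ i, g i * (if p i then y else x) := by
    rw [← e.sum_comp]
    simp only [hg, hp, ite_not]
  rw [two_mul, Finset.mul_sum]
  nth_rewrite 2 [hswap]
  rw [← Finset.sum_add_distrib]
  refine Finset.sum_congr rfl fun i _ => ?_
  split_ifs <;> ring

lemma isAlt_iff_alternating {l : List ℕ} : IsAlt l ↔ l.Alternating true := by
  simp [IsAlt, alternating_iff_forall_getElem, Step]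

lemma permList_eq_map_ofFn (n : ℕ) (w : Equiv.Perm (Fin n)) :
    permList n w = (List.ofFn w).map Fin.val :=
  List.map_ofFn.symm

@[simp] lemma length_permList (n : ℕ) (w : Equiv.Perm (Fin n)) : (permList n w).length = n :=
  List.length_ofFn

lemma runCount_eq_turns (n : ℕ) (w : Equiv.Perm (Fin n)) :
    runCount n w = if n ≤ 1 then n else 1 + (permList n w).turns := by
  rw [← card_filter_turn_eq_turns, length_permList, runCount]

lemma runCount_trans_revPerm (n : ℕ) (w : Equiv.Perm (Fin n)) :
    runCount n (w.trans Fin.revPerm) = runCount n w := by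
  have hrev : List.ofFn (w.trans Fin.revPerm) = (List.ofFn w).map Fin.rev := by
    rw [List.map_ofFn, Equiv.coe_trans]
    rfl
  simp only [runCount_eq_turns, permList_eq_map_ofFn, turns_map_of_strictMono Fin.val_strictMono,
    hrev, turns_map_of_strictAnti Fin.rev_strictAnti]

lemma isChain_ne_permList (n : ℕ) (w : Equiv.Perm (Fin n)) : (permList n w).IsChain (· ≠ ·) :=
  List.Pairwise.isChain (List.nodup_ofFn.mpr (Fin.val_injective.comp w.injective))

section FirstTwoValues

variable {m : ℕ} (w : Equiv.Perm (Fin (m + 2)))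

lemma permList_add_two :
    permList (m + 2) w =
      (w 0 : ℕ) :: (w 1 : ℕ) :: List.ofFn fun i : Fin m => (w i.succ.succ : ℕ) := by
  simp [permList, List.ofFn_succ]

lemma runCount_le : runCount (m + 2) w ≤ m + 1 := by
  have := turns_le_length_sub_two (permList (m + 2) w)
  rw [length_permList] at this
  rw [runCount_eq_turns, if_neg (by omega)]
  omega

lemma asLen_eq_runCount_add :
    asLen (m + 2) w = runCount (m + 2) w + if w 1 < w 0 then 1 else 0 := by
  have hne := isChain_ne_permList _ w
  rw [runCount_eq_turns, if_neg (by omega), asLen]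
  rw [permList_add_two] at hne ⊢
  apply IsGreatest.csSup_eq
  constructor
  · obtain ⟨r, hr, halt, hlen⟩ := exists_alternating_sublist hne
    by_cases h : w 1 < w 0
    · have h' : decide ((w 1 : ℕ) < w 0) = true := by simpa using h
      refine ⟨_, hr, isAlt_iff_alternating.mpr (h' ▸ halt), ?_⟩
      simp only [length_cons, hlen, h, reduceIte]
      omega
    · have h' : decide ((w 1 : ℕ) < w 0) = false := by simpa using h
      rw [h'] at halt
      refine ⟨_, (sublist_cons_self _ r).trans hr, isAlt_iff_alternating.mpr halt.tail, ?_⟩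
      simp only [hlen, h, reduceIte, add_zero]
      omega
  · rintro k ⟨s, hs, halt, rfl⟩
    have := length_le_of_alternating_sublist hne hs (isAlt_iff_alternating.mp halt)
    simpa only [decide_eq_true_iff, ← Fin.lt_def] using this

lemma trans_revPerm_apply_one_lt_iff :
    w.trans Fin.revPerm 1 < w.trans Fin.revPerm 0 ↔ ¬ w 1 < w 0 := by
  have h01 : w 0 ≠ w 1 := w.injective.ne (by simp)
  simp only [Equiv.trans_apply, Fin.revPerm_apply, Fin.rev_lt_rev, not_lt]
  exact ⟨le_of_lt, fun h => lt_of_le_of_ne h h01⟩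

end FirstTwoValues

theorem T_eq_half_G (n : ℕ) (hn : 2 ≤ n) :
    2 * ∑ k ∈ Finset.range (n + 1),
        Polynomial.C (aCount n k : ℤ) * Polynomial.X ^ k =
      (1 + Polynomial.X) * ∑ k ∈ Finset.range (n + 1),
        Polynomial.C (gCount n k : ℤ) * Polynomial.X ^ k := by
  obtain ⟨m, rfl⟩ := Nat.exists_eq_add_of_le' hn
  have hruns (w : Equiv.Perm (Fin (m + 2))) : runCount (m + 2) w < m + 2 + 1 := by
    have := runCount_le w
    omega
  have has (w : Equiv.Perm (Fin (m + 2))) : asLen (m + 2) w < m + 2 + 1 := by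
    have := runCount_le w
    rw [asLen_eq_runCount_add]
    split <;> omega
  simp only [aCount, gCount]
  rw [sum_range_natCard_fiber_mul_X_pow _ has, sum_range_natCard_fiber_mul_X_pow _ hruns]
  simp only [asLen_eq_runCount_add, pow_add, pow_ite, pow_one, pow_zero]
  exact two_mul_sum_mul_ite_of_equiv (Equiv.mulLeft Fin.revPerm) _ _
    (fun w => congrArg (X ^ ·) (runCount_trans_revPerm _ w)) trans_revPerm_apply_one_lt_iff X 1
end
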